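/- arXiv:1004.3037 — 5 statements merged into one kernel-verified Lean document; each statement's English description precedes it below -/
import Mathlib

section
/- Let 1 ≤ a_1 ≤ a_2 ≤ … ≤ a_n be integers, let 0 ≤ ℓ ≤ n, and let t ≥ 0 be an integer. Then Θ_{t,n,ℓ}(a_1,…,a_n) = Pr[ x_1 + x_2 + ⋯ + x_ℓ ≤ t ], where x_1,…,x_ℓ are independent random variables and each x_i is uniformly distributed on {1,…,a_i}. -/
open MeasureTheory ProbabilityTheory
open scoped ENNReal

/-- `theta t as ℓ`: the maximal probability, over all adaptive drawing strategies,
of drawing `ℓ` red balls within `t` draws, where the boxes contain `as` balls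
(each box containing exactly one red ball), defined by the dynamic-programming
recursion of the red ball experiment. A box reduced to `0` balls is discarded. -/
noncomputable def theta : ℕ → List ℕ → ℕ → ℝ
  | _, _, 0 => 1
  | 0, _, _ + 1 => 0
  | t + 1, as, l + 1 =>
    if h : l + 1 ≤ as.length then
      (Finset.range as.length).sup'
        (Finset.nonempty_range_iff.mpr (by omega)) (fun j =>
          ((as.getD j 1 : ℝ))⁻¹ * theta t (as.eraseIdx j) l
            + (1 - ((as.getD j 1 : ℝ))⁻¹) *
                theta t
                  (if as.getD j 1 ≤ 1 then as.eraseIdx j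
                   else as.set j (as.getD j 1 - 1)) (l + 1))
    else 0


/-- number of tuples `x ∈ ∏ [1, bᵢ]` with `∑ x ≤ t`. -/
def cnt : ℕ → List ℕ → ℕ
  | _, [] => 1
  | t, b :: bs => ∑ x ∈ Finset.Icc 1 b, if x ≤ t then cnt (t - x) bs else 0

@[simp] lemma cnt_nil (t : ℕ) : cnt t List.nil = 1 := rfl

lemma cnt_cons (t b : ℕ) (bs : List ℕ) :
    cnt t (b :: bs) = ∑ x ∈ Finset.Icc 1 b, if x ≤ t then cnt (t - x) bs else 0 := rfl

lemma cnt_mono {t t' : ℕ} (h : t ≤ t') (bs : List ℕ) : cnt t bs ≤ cnt t' bs := by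
  induction bs generalizing t t' with
  | nil => simp
  | cons b bs ih =>
    rw [cnt_cons, cnt_cons]
    refine Finset.sum_le_sum fun x hx => ?_
    split_ifs with h1 h2
    · exact ih (by omega)
    · omega
    · exact Nat.zero_le _
    · exact le_rfl

lemma cnt_zero_cons (t : ℕ) (bs : List ℕ) : cnt t (0 :: bs) = 0 := by
  rw [cnt_cons]; simp

lemma cnt_swap (t b c : ℕ) (bs : List ℕ) : cnt t (b :: c :: bs) = cnt t (c :: b :: bs) := by
  have key : ∀ d e : ℕ, cnt t (d :: e :: bs) =
      ∑ x ∈ Finset.Icc 1 d, ∑ y ∈ Finset.Icc 1 e,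
        if x + y ≤ t then cnt (t - (x + y)) bs else 0 := by
    intro d e
    rw [cnt_cons]
    refine Finset.sum_congr rfl fun x _ => ?_
    by_cases hx : x ≤ t
    · rw [if_pos hx, cnt_cons]
      refine Finset.sum_congr rfl fun y _ => ?_
      by_cases hy : x + y ≤ t
      · rw [if_pos (by omega), if_pos hy]
        congr 1
        omega
      · rw [if_neg (by omega), if_neg hy]
    · rw [if_neg hx]
      exact (Finset.sum_eq_zero fun y _ => by rw [if_neg (by omega)]).symm
  rw [key, key, Finset.sum_comm]
  refine Finset.sum_congr rfl fun y _ => Finset.sum_congr rfl fun x _ => ?_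
  rw [Nat.add_comm]

lemma cnt_perm (t : ℕ) {l l' : List ℕ} (h : l.Perm l') : cnt t l = cnt t l' := by
  induction h generalizing t with
  | nil => rfl
  | cons x _ ih =>
    rw [cnt_cons, cnt_cons]
    refine Finset.sum_congr rfl fun y _ => ?_
    split_ifs
    · exact ih _
    · rfl
  | swap x y l => exact cnt_swap t y x l
  | trans _ _ ih1 ih2 => exact (ih1 t).trans (ih2 t)

lemma cnt_succ_cons (t b : ℕ) (hb : 1 ≤ b) (bs : List ℕ) :
    cnt (t + 1) (b :: bs) = cnt t bs + cnt t ((b - 1) :: bs) := by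
  rw [cnt_cons, cnt_cons]
  have h1 : Finset.Icc 1 b = insert 1 (Finset.Icc 2 b) := by
    ext x; simp [Finset.mem_Icc, Finset.mem_insert]; omega
  rw [h1, Finset.sum_insert (by simp [Finset.mem_Icc])]
  rw [if_pos (by omega)]
  have h2 : t + 1 - 1 = t := by omega
  rw [h2]
  congr 1
  rw [show Finset.Icc 2 b = Finset.map ⟨fun x => x + 1, fun a b h => by simpa using h⟩ (Finset.Icc 1 (b - 1)) by
    ext x
    simp only [Finset.mem_Icc, Finset.mem_map, Function.Embedding.coeFn_mk]
    constructor
    · intro h; exact ⟨x - 1, ⟨by omega, by omega⟩, by show x - 1 + 1 = x; omega⟩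
    · rintro ⟨a, ha, rfl⟩; show 2 ≤ a + 1 ∧ a + 1 ≤ b; omega]
  rw [Finset.sum_map]
  refine Finset.sum_congr rfl fun x hx => ?_
  show (if x + 1 ≤ t + 1 then _ else _) = _
  by_cases hxt : x ≤ t
  · rw [if_pos (by omega), if_pos hxt]
    congr 1
    show t + 1 - (x + 1) = t - x
    omega
  · rw [if_neg (by omega), if_neg hxt]

lemma cnt_zero_mem {bs : List ℕ} (h : 0 ∈ bs) (t : ℕ) : cnt t bs = 0 := by
  induction bs generalizing t with
  | nil => simp at h
  | cons b bs ih =>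
    rcases List.mem_cons.mp h with rfl | h
    · exact cnt_zero_cons t bs
    · rw [cnt_cons]
      refine Finset.sum_eq_zero fun x _ => ?_
      split_ifs
      · exact ih h _
      · rfl
/-- `F t bs` : probability that the sum of independent uniforms on `[1,bᵢ]` is `≤ t`. -/
noncomputable def F (t : ℕ) (bs : List ℕ) : ℝ := (cnt t bs : ℝ) / (bs.prod : ℝ)

lemma F_nil (t : ℕ) : F t List.nil = 1 := by simp [F]

lemma F_perm (t : ℕ) {l l' : List ℕ} (h : l.Perm l') : F t l = F t l' := by
  rw [F, F, cnt_perm t h, h.prod_eq]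

lemma F_nonneg (t : ℕ) (bs : List ℕ) : 0 ≤ F t bs := by
  apply div_nonneg <;> positivity

lemma F_zero_mem {bs : List ℕ} (h : 0 ∈ bs) (t : ℕ) : F t bs = 0 := by
  rw [F, cnt_zero_mem h]; simp

lemma F_rec (t b : ℕ) (hb : 1 ≤ b) (bs : List ℕ) :
    F (t + 1) (b :: bs) = (b : ℝ)⁻¹ * F t bs + (1 - (b : ℝ)⁻¹) * F t ((b - 1) :: bs) := by
  by_cases hz : 0 ∈ bs
  · rw [F_zero_mem (List.mem_cons_of_mem _ hz), F_zero_mem hz,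
      F_zero_mem (List.mem_cons_of_mem _ hz)]
    ring
  · have hPne : (bs.prod : ℝ) ≠ 0 := by
      simp only [ne_eq, Nat.cast_eq_zero, List.prod_eq_zero_iff]
      exact hz
    rcases Nat.lt_or_ge b 2 with hb2 | hb2
    · have hb1 : b = 1 := by omega
      subst hb1
      simp only [Nat.cast_one, inv_one, sub_self, zero_mul, add_zero, one_mul]
      rw [F, F, cnt_succ_cons t 1 le_rfl bs]
      simp [cnt_zero_cons]
    · have hbne : (b : ℝ) ≠ 0 := by positivity
      have hb1ne : ((b - 1 : ℕ) : ℝ) ≠ 0 := by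
        have : 1 ≤ b - 1 := by omega
        have : (0:ℝ) < ((b-1 : ℕ) : ℝ) := by exact_mod_cast Nat.lt_of_lt_of_le Nat.zero_lt_one this
        linarith
      have hcast : ((b - 1 : ℕ) : ℝ) = (b : ℝ) - 1 := by
        simp [Nat.cast_sub hb]
      have hb1ne' : (b : ℝ) - 1 ≠ 0 := by rw [← hcast]; exact hb1ne
      rw [F, F, F, cnt_succ_cons t b hb bs]
      rw [List.prod_cons, List.prod_cons, Nat.cast_mul, Nat.cast_mul, Nat.cast_add, hcast]
      rw [add_div]
      congr 1
      · rw [div_mul_eq_div_div_swap, div_eq_inv_mul]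
      · have h4 : (1 - (b:ℝ)⁻¹) = (↑b)⁻¹ * ((b:ℝ) - 1) := by
          field_simp
        have h5 : ((b:ℝ) - 1) * ((cnt t ((b-1) :: bs) : ℝ)/(((b:ℝ)-1)*(bs.prod : ℝ))) =
            (cnt t ((b-1) :: bs) : ℝ)/(bs.prod : ℝ) := by
          rw [← mul_div_assoc]
          exact mul_div_mul_left _ _ hb1ne'
        rw [h4, mul_assoc, h5, div_mul_eq_div_div_swap, div_eq_inv_mul]

lemma F_cons_le (t b : ℕ) (hb : 1 ≤ b) (bs : List ℕ) : F t (b :: bs) ≤ F t bs := by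
  by_cases hz : (bs.prod : ℝ) = 0
  · rw [F, F, List.prod_cons, Nat.cast_mul, hz, mul_zero, div_zero, div_zero]
  · have hP : (0:ℝ) < (bs.prod : ℝ) := lt_of_le_of_ne (by positivity) (Ne.symm hz)
    have hbP : (0:ℝ) < (b:ℝ) * (bs.prod : ℝ) := by
      have : (0:ℝ) < (b:ℝ) := by exact_mod_cast hb
      positivity
    have hkey : cnt t (b :: bs) ≤ b * cnt t bs := by
      rw [cnt_cons]
      calc ∑ x ∈ Finset.Icc 1 b, (if x ≤ t then cnt (t - x) bs else 0)
          ≤ ∑ _x ∈ Finset.Icc 1 b, cnt t bs := by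
            refine Finset.sum_le_sum fun x _ => ?_
            split_ifs
            · exact cnt_mono (Nat.sub_le t x) bs
            · exact Nat.zero_le _
        _ = b * cnt t bs := by rw [Finset.sum_const, Nat.Icc_eq_range', smul_eq_mul]; simp
    rw [F, F, List.prod_cons, Nat.cast_mul, div_le_div_iff₀ hbP hP]
    calc (cnt t (b :: bs) : ℝ) * (bs.prod : ℝ) ≤ ((b * cnt t bs : ℕ) : ℝ) * (bs.prod : ℝ) := by
          have : (cnt t (b :: bs) : ℝ) ≤ ((b * cnt t bs : ℕ) : ℝ) := by exact_mod_cast hkey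
          exact mul_le_mul_of_nonneg_right this (le_of_lt hP)
      _ = (cnt t bs : ℝ) * ((b:ℝ) * (bs.prod : ℝ)) := by push_cast; ring

lemma cnt_split (t b : ℕ) (hb : 1 ≤ b) (bs : List ℕ) :
    cnt t (b :: bs) = cnt t ((b - 1) :: bs) + (if b ≤ t then cnt (t - b) bs else 0) := by
  rw [cnt_cons, cnt_cons]
  have h1 : Finset.Icc 1 b = insert b (Finset.Icc 1 (b - 1)) := by
    ext x; simp only [Finset.mem_Icc, Finset.mem_insert]; omega
  rw [h1, Finset.sum_insert (by simp only [Finset.mem_Icc]; omega), Nat.add_comm]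

lemma F_dec (t b : ℕ) (hb : 2 ≤ b) (bs : List ℕ) : F t (b :: bs) ≤ F t ((b - 1) :: bs) := by
  by_cases hz : (bs.prod : ℝ) = 0
  · rw [F, F, List.prod_cons, List.prod_cons, Nat.cast_mul, Nat.cast_mul, hz,
      mul_zero, mul_zero, div_zero, div_zero]
  · have hP : (0:ℝ) < (bs.prod : ℝ) := lt_of_le_of_ne (by positivity) (Ne.symm hz)
    have hb1 : 1 ≤ b - 1 := by omega
    have hkey : (b - 1) * cnt t (b :: bs) ≤ b * cnt t ((b - 1) :: bs) := by
      rw [cnt_split t b (by omega) bs, Nat.mul_add]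
      have h2 : (b - 1) * (if b ≤ t then cnt (t - b) bs else 0) ≤ cnt t ((b - 1) :: bs) := by
        split_ifs with hbt
        · rw [cnt_cons]
          calc (b-1) * cnt (t - b) bs
              = ∑ _x ∈ Finset.Icc 1 (b-1), cnt (t - b) bs := by
                rw [Finset.sum_const, smul_eq_mul]; simp
            _ ≤ ∑ x ∈ Finset.Icc 1 (b-1), (if x ≤ t then cnt (t - x) bs else 0) := by
                refine Finset.sum_le_sum fun x hx => ?_
                simp only [Finset.mem_Icc] at hx
                rw [if_pos (by omega)]
                exact cnt_mono (by omega) bs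
        · simp
      calc (b-1) * cnt t ((b-1) :: bs) + (b-1) * (if b ≤ t then cnt (t - b) bs else 0)
          ≤ (b-1) * cnt t ((b-1) :: bs) + cnt t ((b-1) :: bs) := Nat.add_le_add_left h2 _
        _ = b * cnt t ((b - 1) :: bs) := by
            have : b - 1 + 1 = b := by omega
            rw [← Nat.succ_mul, Nat.succ_eq_add_one, this]
    have hbpos : (0:ℝ) < (b:ℝ) := by positivity
    have hb1pos : (0:ℝ) < ((b-1:ℕ):ℝ) := by exact_mod_cast Nat.lt_of_lt_of_le Nat.zero_lt_one hb1
    rw [F, F, List.prod_cons, List.prod_cons, Nat.cast_mul, Nat.cast_mul,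
      div_le_div_iff₀ (by positivity) (by positivity)]
    have h3 : ((b-1:ℕ):ℝ) * (cnt t (b :: bs) : ℝ) ≤ (b:ℝ) * (cnt t ((b-1) :: bs) : ℝ) := by
      exact_mod_cast hkey
    nlinarith [mul_le_mul_of_nonneg_right h3 hP.le]
lemma cnt_t_zero {bs : List ℕ} (h : bs ≠ []) : cnt 0 bs = 0 := by
  match bs with
  | b :: bs =>
    rw [cnt_cons]
    refine Finset.sum_eq_zero fun x hx => ?_
    simp only [Finset.mem_Icc] at hx
    rw [if_neg (by omega)]

/-- the sorted version of a list. -/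
def sortCoe (as : List ℕ) : List ℕ := Multiset.sort (↑as) (· ≤ ·)

lemma sortCoe_perm (as : List ℕ) : (sortCoe as).Perm as :=
  Multiset.coe_eq_coe.mp (Multiset.sort_eq _ _)

lemma sortCoe_sorted (as : List ℕ) : (sortCoe as).Pairwise (· ≤ ·) :=
  Multiset.pairwise_sort _ _

lemma sortCoe_eq {s as : List ℕ} (hs : s.Pairwise (· ≤ ·)) (hp : s.Perm as) : sortCoe as = s :=
  List.Perm.eq_of_pairwise' (sortCoe_sorted as) hs ((sortCoe_perm as).trans hp.symm)

/-- value of the optimal strategy, in closed form : `F t (ℓ smallest boxes)`. -/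
noncomputable def G (t : ℕ) (as : List ℕ) (ℓ : ℕ) : ℝ :=
  if ℓ ≤ as.length then F t ((sortCoe as).take ℓ) else 0

lemma G_zero (t : ℕ) (as : List ℕ) : G t as 0 = 1 := by
  rw [G, if_pos (Nat.zero_le _)]
  simp [F_nil]

lemma F_key (t b : ℕ) (hb : 1 ≤ b) {K : List ℕ} (hbK : b ∈ K) :
    F (t + 1) K = (b : ℝ)⁻¹ * F t (K.erase b) + (1 - (b : ℝ)⁻¹) * F t ((b - 1) :: K.erase b) := by
  rw [F_perm (t+1) (List.perm_cons_erase hbK), F_rec t b hb]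

theorem theta_eq_G (t : ℕ) : ∀ (as : List ℕ) (ℓ : ℕ), (∀ x ∈ as, 1 ≤ x) →
    theta t as ℓ = G t as ℓ := by
  induction t with
  | zero =>
    intro as ℓ h1
    match ℓ with
    | 0 => rw [G_zero]; rfl
    | l + 1 =>
      show (0 : ℝ) = G 0 as (l + 1)
      rw [G]
      split_ifs with h
      · have hlen : ((sortCoe as).take (l+1)).length = l + 1 := by
          rw [List.length_take, (sortCoe_perm as).length_eq]
          omega
        have hne : (sortCoe as).take (l+1) ≠ [] := by
          intro hc; rw [hc] at hlen; simp at hlen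
        rw [F, cnt_t_zero hne]
        simp
      · rfl
  | succ t ih =>
    intro as ℓ h1
    match ℓ with
    | 0 => rw [G_zero]; rfl
    | l + 1 =>
      rw [theta]
      by_cases h : l + 1 ≤ as.length
      · rw [dif_pos h, G, if_pos h]
        set s : List ℕ := sortCoe as with hs_def
        have hsp : s.Perm as := sortCoe_perm as
        have hss : s.Pairwise (· ≤ ·) := sortCoe_sorted as
        have hslen : s.length = as.length := hsp.length_eq
        have hls : l < s.length := by omega
        have h1s : ∀ x ∈ s, 1 ≤ x := fun x hx => h1 x (hsp.mem_iff.mp hx)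
        set D : List ℕ := s.take l with hD_def
        set c : ℕ := s.getD l 1 with hc_def
        set E : List ℕ := s.drop (l + 1) with hE_def
        have hcel : c = s[l]'hls := List.getD_eq_getElem s 1 hls
        have hsplit : s = D ++ c :: E := by
          rw [hD_def, hE_def, hcel]
          rw [← List.drop_eq_getElem_cons hls, List.take_append_drop]
        have hDlen : D.length = l := by rw [hD_def, List.length_take]; omega
        have hsortDcE : (D ++ c :: E).Pairwise (· ≤ ·) := hsplit ▸ hss
        rw [List.pairwise_append] at hsortDcE
        obtain ⟨hDsort, hcEsort, hDcE⟩ := hsortDcE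
        rw [List.pairwise_cons] at hcEsort
        obtain ⟨hcE, hEsort⟩ := hcEsort
        have hDc : ∀ x ∈ D, x ≤ c := fun x hx => hDcE x hx c (List.mem_cons_self)
        have hDE : ∀ x ∈ D, ∀ y ∈ E, x ≤ y := fun x hx y hy =>
          hDcE x hx y (List.mem_cons_of_mem _ hy)
        have hc1 : 1 ≤ c := h1s c (hsplit ▸ (List.mem_append_right D (List.mem_cons_self)))
        have hD1 : ∀ x ∈ D, 1 ≤ x := fun x hx => h1s x (hsplit ▸ List.mem_append_left _ hx)
        have hE1 : ∀ x ∈ E, 1 ≤ x := fun x hx =>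
          h1s x (hsplit ▸ List.mem_append_right D (List.mem_cons_of_mem _ hx))
        set K : List ℕ := D ++ [c] with hK_def
        have htake : s.take (l + 1) = K := by
          rw [List.take_succ, ← hD_def, List.getElem?_eq_getElem hls, ← hcel]
          rfl
        rw [htake]
        -- the main claim about each term of the sup
        have main : ∀ j ∈ Finset.range as.length,
            ((as.getD j 1 : ℝ))⁻¹ * theta t (as.eraseIdx j) l
              + (1 - ((as.getD j 1 : ℝ))⁻¹) *
                  theta t (if as.getD j 1 ≤ 1 then as.eraseIdx j
                    else as.set j (as.getD j 1 - 1)) (l + 1)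
              ≤ F (t + 1) K ∧
            (as.getD j 1 ∈ D ∨ as.getD j 1 = c →
              ((as.getD j 1 : ℝ))⁻¹ * theta t (as.eraseIdx j) l
              + (1 - ((as.getD j 1 : ℝ))⁻¹) *
                  theta t (if as.getD j 1 ≤ 1 then as.eraseIdx j
                    else as.set j (as.getD j 1 - 1)) (l + 1)
              = F (t + 1) K) := by
          intro j hj
          rw [Finset.mem_range] at hj
          set b : ℕ := as.getD j 1 with hb_def
          have hbj : b = as[j]'hj := List.getD_eq_getElem as 1 hj
          have hbas : b ∈ as := hbj ▸ List.getElem_mem hj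
          have hb1 : 1 ≤ b := h1 b hbas
          have hbs : b ∈ s := hsp.mem_iff.mpr hbas
          -- erased list facts
          have hperm_eraseIdx : (as.eraseIdx j).Perm (s.erase b) := by
            have h2 : (as.erase b).Perm (as.eraseIdx j) := hbj ▸ List.erase_getElem hj
            exact (((hsp.erase b).trans h2).symm)
          have h1e : ∀ x ∈ as.eraseIdx j, 1 ≤ x := fun x hx =>
            h1 x ((List.eraseIdx_sublist as j).subset hx)
          have hse_sorted : (s.erase b).Pairwise (· ≤ ·) :=
            List.Pairwise.sublist (List.erase_sublist : (s.erase b).Sublist s) hss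
          have hlen_e : (as.eraseIdx j).length = as.length - 1 :=
            List.length_eraseIdx_of_lt hj
          have hterm1 : theta t (as.eraseIdx j) l = F t ((s.erase b).take l) := by
            rw [ih _ l h1e, G, if_pos (by omega), sortCoe_eq hse_sorted hperm_eraseIdx.symm]
          -- perm fact for the decremented list
          have hpset : (as.set j (b - 1)).Perm ((b - 1) :: s.erase b) := by
            have h3 : as.set j (b - 1) = as.take j ++ (b - 1) :: as.drop (j + 1) :=
              List.set_eq_take_cons_drop _ hj
            have h4 : (as.set j (b - 1)).Perm ((b - 1) :: as.eraseIdx j) := by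
              rw [h3, List.eraseIdx_eq_take_drop_succ]
              exact List.perm_middle
            exact h4.trans (hperm_eraseIdx.cons _)
          have h1set : 2 ≤ b → ∀ x ∈ as.set j (b - 1), 1 ≤ x := by
            intro hb2 x hx
            rcases List.mem_cons.mp (hpset.mem_iff.mp hx) with rfl | hx'
            · omega
            · exact h1 x (hsp.mem_iff.mp ((List.erase_sublist : (s.erase b).Sublist s).subset hx'))
          have hlen_set : (as.set j (b - 1)).length = as.length := by simp
          by_cases hbK' : b ∈ D ∨ b = c
          · -- equality cases
            have hl_facts : ((s.erase b).take l = K.erase b) ∧ b ∈ K ∧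
                (2 ≤ b → ((sortCoe (as.set j (b-1))).take (l+1)).Perm ((b - 1) :: K.erase b)) := by
              by_cases hbD : b ∈ D
              · -- b among the l smallest
                have hl1 : 0 < l := by
                  have := List.length_pos_iff.mpr (List.ne_nil_of_mem hbD)
                  omega
                have hDe_len : (D.erase b).length = l - 1 := by
                  rw [List.length_erase_of_mem hbD, hDlen]
                have hKe : K.erase b = D.erase b ++ [c] := List.erase_append_left _ hbD
                have hse : s.erase b = D.erase b ++ c :: E := by
                  rw [hsplit, List.erase_append_left _ hbD]
                have htl : (s.erase b).take l = K.erase b := by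
                  rw [hse, hKe, List.take_append,
                    List.take_of_length_le (by omega), hDe_len]
                  have h5 : l - (l - 1) = 1 := by omega
                  rw [h5]
                  simp
                refine ⟨htl, List.mem_append_left _ hbD, fun hb2 => ?_⟩
                set OI : List ℕ := List.orderedInsert (· ≤ ·) (b - 1) (D.erase b) with hOI_def
                have hOIp : OI.Perm ((b - 1) :: D.erase b) := List.perm_orderedInsert _ _ _
                have hDe_sorted : (D.erase b).Pairwise (· ≤ ·) :=
                  List.Pairwise.sublist (List.erase_sublist : (D.erase b).Sublist D) hDsort
                have hOIs : OI.Pairwise (· ≤ ·) := List.Pairwise.orderedInsert _ _ hDe_sorted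
                have hOIle : ∀ x ∈ OI, x ≤ c := by
                  intro x hx
                  rcases List.mem_cons.mp (hOIp.mem_iff.mp hx) with rfl | hx'
                  · have := hDc b hbD; omega
                  · exact hDc x ((List.erase_sublist : (D.erase b).Sublist D).subset hx')
                have hOIlen : OI.length = l := by
                  rw [hOI_def, List.orderedInsert_length, hDe_len]
                  omega
                have hw_sorted : (OI ++ c :: E).Pairwise (· ≤ ·) := by
                  rw [List.pairwise_append]
                  refine ⟨hOIs, ?_, ?_⟩
                  · rw [List.pairwise_cons]
                    exact ⟨hcE, hEsort⟩
                  · intro x hx y hy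
                    rcases List.mem_cons.mp hy with rfl | hy'
                    · exact hOIle x hx
                    · exact le_trans (hOIle x hx) (hcE y hy')
                have hw_perm : (OI ++ c :: E).Perm (as.set j (b - 1)) := by
                  refine List.Perm.trans ?_ hpset.symm
                  refine List.Perm.trans (hOIp.append_right (c :: E)) ?_
                  rw [hse]
                  exact List.Perm.refl _
                have hsc2 : sortCoe (as.set j (b - 1)) = OI ++ c :: E :=
                  sortCoe_eq hw_sorted hw_perm
                rw [hsc2, List.take_append,
                  List.take_of_length_le (by omega), hOIlen]
                have h6 : l + 1 - l = 1 := by omega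
                rw [h6, hKe]
                have h7 : List.take 1 (c :: E) = [c] := by simp
                rw [h7]
                exact hOIp.append_right [c]
              · -- b = c, the (l+1)-st smallest
                have hbc : b = c := hbK'.resolve_left hbD
                have hcD : c ∉ D := hbc ▸ hbD
                have hKe : K.erase b = D := by
                  rw [hbc, hK_def, List.erase_append_right _ hcD, List.erase_cons_head,
                    List.append_nil]
                have hse : s.erase b = D ++ E := by
                  rw [hbc, hsplit, List.erase_append_right _ hcD, List.erase_cons_head]
                have htl : (s.erase b).take l = K.erase b := by
                  rw [hse, hKe, List.take_append,
                    List.take_of_length_le (by rw [hDlen]), hDlen, Nat.sub_self,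
                    List.take_zero, List.append_nil]
                refine ⟨htl, by rw [hbc]; exact List.mem_append_right _ (List.mem_singleton_self _),
                  fun hb2 => ?_⟩
                set OI : List ℕ := List.orderedInsert (· ≤ ·) (b - 1) D with hOI_def
                have hOIp : OI.Perm ((b - 1) :: D) := List.perm_orderedInsert _ _ _
                have hOIs : OI.Pairwise (· ≤ ·) := List.Pairwise.orderedInsert _ _ hDsort
                have hOIle : ∀ x ∈ OI, x ≤ b := by
                  intro x hx
                  rcases List.mem_cons.mp (hOIp.mem_iff.mp hx) with rfl | hx'
                  · omega
                  · have := hDc x hx'; omega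
                have hOIlen : OI.length = l + 1 := by
                  rw [hOI_def, List.orderedInsert_length, hDlen]
                have hw_sorted : (OI ++ E).Pairwise (· ≤ ·) := by
                  rw [List.pairwise_append]
                  refine ⟨hOIs, hEsort, fun x hx y hy => ?_⟩
                  have h8 := hOIle x hx
                  have h9 := hcE y hy
                  omega
                have hw_perm : (OI ++ E).Perm (as.set j (b - 1)) := by
                  refine List.Perm.trans ?_ hpset.symm
                  refine List.Perm.trans (hOIp.append_right E) ?_
                  rw [hse]
                  exact List.Perm.refl _
                have hsc2 : sortCoe (as.set j (b - 1)) = OI ++ E :=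
                  sortCoe_eq hw_sorted hw_perm
                rw [hsc2, List.take_append,
                  List.take_of_length_le (by omega), hOIlen, Nat.sub_self,
                  List.take_zero, List.append_nil, hKe]
                exact hOIp
            obtain ⟨hKe, hbK, hw⟩ := hl_facts
            have hterm1' : theta t (as.eraseIdx j) l = F t (K.erase b) := by
              rw [hterm1, hKe]
            have heq : (b : ℝ)⁻¹ * theta t (as.eraseIdx j) l
                + (1 - (b : ℝ)⁻¹) * theta t
                    (if b ≤ 1 then as.eraseIdx j else as.set j (b - 1)) (l + 1)
                = F (t + 1) K := by
              rcases Nat.lt_or_ge b 2 with hb2 | hb2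
              · have hb1' : b = 1 := by omega
                rw [F_key t b hb1 hbK, hterm1', hb1']
                norm_num
              · rw [if_neg (by omega), ih _ (l+1) (h1set hb2), G,
                  if_pos (by rw [hlen_set]; omega)]
                rw [F_perm t (hw hb2), F_key t b hb1 hbK, hterm1']
            exact ⟨le_of_eq heq, fun _ => heq⟩
          · -- inequality case
            push_neg at hbK'
            obtain ⟨hbD, hbc⟩ := hbK'
            have hbE : b ∈ E := by
              have := hsplit ▸ hbs
              rcases List.mem_append.mp this with h' | h'
              · exact absurd h' hbD
              · rcases List.mem_cons.mp h' with h'' | h''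
                · exact absurd h'' hbc
                · exact h''
            have hcb : c < b := lt_of_le_of_ne (hcE b hbE) (Ne.symm hbc)
            have hb2 : 2 ≤ b := by omega
            have hse : s.erase b = D ++ c :: E.erase b := by
              rw [hsplit, List.erase_append_right _ hbD, List.erase_cons_tail]
              simp only [beq_iff_eq]
              omega
            have htakel : (s.erase b).take l = D := by
              rw [hse, List.take_append,
                List.take_of_length_le (by rw [hDlen]),
                hDlen, Nat.sub_self, List.take_zero, List.append_nil]
            -- the decremented sorted list
            set OI : List ℕ := List.orderedInsert (· ≤ ·) (b - 1) (E.erase b) with hOI_def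
            have hOIp : OI.Perm ((b - 1) :: E.erase b) := List.perm_orderedInsert _ _ _
            have hEe_sorted : (E.erase b).Pairwise (· ≤ ·) :=
              List.Pairwise.sublist (List.erase_sublist : (E.erase b).Sublist E) hEsort
            have hOIs : OI.Pairwise (· ≤ ·) := List.Pairwise.orderedInsert _ _ hEe_sorted
            have hOIge : ∀ x ∈ OI, c ≤ x := by
              intro x hx
              rcases List.mem_cons.mp (hOIp.mem_iff.mp hx) with rfl | hx'
              · omega
              · exact hcE x ((List.erase_sublist : (E.erase b).Sublist E).subset hx')
            have hw_sorted : (D ++ c :: OI).Pairwise (· ≤ ·) := by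
              rw [List.pairwise_append]
              refine ⟨hDsort, ?_, ?_⟩
              · rw [List.pairwise_cons]
                exact ⟨hOIge, hOIs⟩
              · intro x hx y hy
                rcases List.mem_cons.mp hy with rfl | hy'
                · exact hDc x hx
                · exact le_trans (hDc x hx) (hOIge y hy')
            have hw_perm : (D ++ c :: OI).Perm (as.set j (b - 1)) := by
              refine List.Perm.trans ?_ hpset.symm
              have p1 : (D ++ c :: OI).Perm (D ++ c :: (b - 1) :: E.erase b) :=
                List.Perm.append_left D (hOIp.cons c)
              refine p1.trans ?_
              have p2 : (c :: (b - 1) :: E.erase b).Perm ((b - 1) :: c :: E.erase b) :=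
                List.Perm.swap _ _ _
              refine (List.Perm.append_left D p2).trans ?_
              rw [hse]
              exact List.perm_middle
            have hsc2 : sortCoe (as.set j (b - 1)) = D ++ c :: OI :=
              sortCoe_eq hw_sorted hw_perm
            have htake2 : (sortCoe (as.set j (b - 1))).take (l + 1) = D ++ [c] := by
              rw [hsc2, List.take_append,
                List.take_of_length_le (by rw [hDlen]; omega), hDlen]
              have : l + 1 - l = 1 := by omega
              rw [this]
              simp
            have hterm2 : theta t (as.set j (b - 1)) (l + 1) = F t (D ++ [c]) := by
              rw [ih _ (l+1) (h1set hb2), G, if_pos (by rw [hlen_set]; omega), htake2]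
            rw [if_neg (by omega), hterm1, htakel, hterm2]
            -- now the pure inequality
            have hKc : F (t + 1) K = (c : ℝ)⁻¹ * F t D + (1 - (c : ℝ)⁻¹) * F t ((c - 1) :: D) := by
              rw [hK_def, F_perm (t+1) (List.perm_append_singleton c D), F_rec t c hc1 D]
            have hA : F t (D ++ [c]) = F t (c :: D) := F_perm t (List.perm_append_singleton c D)
            have hBA : F t (c :: D) ≤ F t D := F_cons_le t c hc1 D
            have hcpos : (0:ℝ) < (c:ℝ) := by exact_mod_cast hc1
            have hbpos : (0:ℝ) < (b:ℝ) := by positivity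
            have hinv : (b:ℝ)⁻¹ ≤ (c:ℝ)⁻¹ := by
              apply inv_anti₀ hcpos
              exact_mod_cast le_of_lt hcb
            have hinv1 : (c:ℝ)⁻¹ ≤ 1 := by
              rw [← inv_one]
              apply inv_anti₀ one_pos
              exact_mod_cast hc1
            have hdec : (1 - (c:ℝ)⁻¹) * F t (c :: D) ≤ (1 - (c:ℝ)⁻¹) * F t ((c - 1) :: D) := by
              rcases Nat.lt_or_ge c 2 with hc2 | hc2
              · have : c = 1 := by omega
                rw [this]
                norm_num
              · exact mul_le_mul_of_nonneg_left (F_dec t c hc2 D) (by linarith)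
            constructor
            · rw [hKc, hA]
              have hstep : (b:ℝ)⁻¹ * F t D + (1 - (b:ℝ)⁻¹) * F t (c :: D)
                  ≤ (c:ℝ)⁻¹ * F t D + (1 - (c:ℝ)⁻¹) * F t (c :: D) := by
                nlinarith [sub_nonneg.mpr hBA, sub_nonneg.mpr hinv]
              linarith
            · intro hcon
              exact absurd hcon (by push_neg; exact ⟨hbD, hbc⟩)
        refine le_antisymm (Finset.sup'_le _ _ fun j hj => (main j hj).1) ?_
        -- existence of an optimal index
        have hmem : s[0]'(by omega) ∈ as := hsp.mem_iff.mp (List.getElem_mem _)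
        obtain ⟨j0, hj0, hj0v⟩ := List.mem_iff_getElem.mp hmem
        have hj0d : as.getD j0 1 = s[0]'(by omega) := by
          rw [List.getD_eq_getElem as 1 hj0, hj0v]
        have hcase : as.getD j0 1 ∈ D ∨ as.getD j0 1 = c := by
          rcases Nat.eq_zero_or_pos l with hl0 | hlpos
          · right
            rw [hj0d, hcel]
            congr 1
            omega
          · left
            rw [hj0d]
            have h0D : 0 < D.length := by omega
            have : D[0]'h0D ∈ D := List.getElem_mem _
            have hDe : D[0]'h0D = s[0]'(by omega) := by
              simp only [hD_def]
              exact List.getElem_take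
            rwa [hDe] at this
        have := (main j0 (Finset.mem_range.mpr hj0)).2 hcase
        exact Finset.le_sup'_of_le _ (Finset.mem_range.mpr hj0) this.ge
      · rw [dif_neg h, G, if_neg h]
lemma card_cnt : ∀ (m : ℕ) (b : Fin m → ℕ) (t : ℕ),
    ((Fintype.piFinset fun i => Finset.Icc 1 (b i)).filter fun v => ∑ i, v i ≤ t).card
      = cnt t (List.ofFn b) := by
  intro m
  induction m with
  | zero =>
    intro b t
    rw [List.ofFn_zero, cnt_nil]
    rw [Finset.card_eq_one]
    refine ⟨fun i => i.elim0, ?_⟩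
    ext v
    simp only [Finset.mem_filter, Fintype.mem_piFinset, Finset.mem_singleton]
    constructor
    · intro _; funext i; exact i.elim0
    · rintro rfl
      exact ⟨fun i => i.elim0, by simp⟩
  | succ m ihm =>
    intro b t
    rw [List.ofFn_succ, cnt_cons]
    rw [Finset.card_eq_sum_card_fiberwise
      (f := fun v : Fin (m+1) → ℕ => v 0) (t := Finset.Icc 1 (b 0))
      (fun v hv => by
        simp only [Finset.mem_coe, Finset.mem_filter, Fintype.mem_piFinset] at hv
        exact hv.1 0)]
    refine Finset.sum_congr rfl fun x hx => ?_
    simp only [Finset.mem_Icc] at hx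
    by_cases hxt : x ≤ t
    · rw [if_pos hxt, ← ihm (fun i => b i.succ) (t - x)]
      refine Finset.card_bij' (fun v _ => fun i => v i.succ)
        (fun w _ => Fin.cons x w) ?_ ?_ ?_ ?_
      · intro v hv
        simp only [Finset.mem_filter, Fintype.mem_piFinset] at hv ⊢
        obtain ⟨⟨hv1, hv2⟩, hv3⟩ := hv
        have hsum : ∑ i, v i = v 0 + ∑ i : Fin m, v i.succ := Fin.sum_univ_succ v
        exact ⟨fun i => hv1 i.succ, by omega⟩
      · intro w hw
        simp only [Finset.mem_filter, Fintype.mem_piFinset] at hw ⊢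
        obtain ⟨hw1, hw2⟩ := hw
        have hsum : ∑ i, (Fin.cons (α := fun _ => ℕ) x w) i = x + ∑ i : Fin m, w i := by
          rw [Fin.sum_univ_succ]
          simp
        refine ⟨⟨fun i => ?_, by omega⟩, by simp⟩
        induction i using Fin.cases with
        | zero =>
          simp only [Fin.cons_zero]
          exact Finset.mem_Icc.mpr hx
        | succ k =>
          simp only [Fin.cons_succ]
          exact hw1 k
      · intro v hv
        simp only [Finset.mem_filter, Fintype.mem_piFinset] at hv
        funext i
        induction i using Fin.cases with
        | zero =>
          simp only [Fin.cons_zero]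
          exact hv.2.symm
        | succ k => simp only [Fin.cons_succ]
      · intro w hw
        funext i
        simp
    · rw [if_neg hxt]
      rw [Finset.card_eq_zero]
      rw [Finset.filter_eq_empty_iff]
      intro v hv
      simp only [Finset.mem_filter, Fintype.mem_piFinset] at hv
      obtain ⟨hv1, hv2⟩ := hv
      intro hveq
      have : v 0 ≤ ∑ i, v i := Finset.single_le_sum (fun i _ => Nat.zero_le (v i)) (Finset.mem_univ 0)
      omega
theorem theta_eq_prob_sum_le
    {n : ℕ} (a : Fin n → ℕ) (ha : ∀ i, 1 ≤ a i) (hmono : Monotone a)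
    (ℓ t : ℕ) (hℓ : ℓ ≤ n)
    {Ω : Type*} [MeasurableSpace Ω] (μ : Measure Ω) [IsProbabilityMeasure μ]
    (X : Fin ℓ → Ω → ℕ) (hmeas : ∀ i, Measurable (X i))
    (hindep : iIndepFun X μ)
    (hunif : ∀ (i : Fin ℓ) (k : ℕ),
      μ {ω | X i ω = k} =
        if 1 ≤ k ∧ k ≤ a (Fin.castLE hℓ i) then ((a (Fin.castLE hℓ i) : ℝ≥0∞))⁻¹ else 0) :
    theta t (List.ofFn a) ℓ = (μ {ω | ∑ i, X i ω ≤ t}).toReal := by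
  set b : Fin ℓ → ℕ := fun i => a (Fin.castLE hℓ i) with hb_def
  have hb1 : ∀ i, 1 ≤ b i := fun i => ha _
  have h1 : ∀ x ∈ List.ofFn a, 1 ≤ x := by
    intro x hx
    obtain ⟨i, rfl⟩ := Set.mem_range.mp ((List.mem_ofFn' _ _).mp hx)
    exact ha i
  rw [theta_eq_G t (List.ofFn a) ℓ h1, G, if_pos (by rw [List.length_ofFn]; exact hℓ)]
  have hsort : sortCoe (List.ofFn a) = List.ofFn a :=
    sortCoe_eq ((List.sortedLE_ofFn_iff.mpr hmono).pairwise) (List.Perm.refl _)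
  rw [hsort]
  have htake : (List.ofFn a).take ℓ = List.ofFn b := by
    rw [← Fin.ofFn_take_eq_take_ofFn hℓ a]
    rfl
  rw [htake]
  set W : Finset (Fin ℓ → ℕ) :=
    (Fintype.piFinset fun _ : Fin ℓ => Finset.range (t+1)).filter (fun v => ∑ i, v i ≤ t) with hW
  set A : (Fin ℓ → ℕ) → Set Ω := fun v => ⋂ i, X i ⁻¹' {v i} with hA
  have hevent : {ω | ∑ i, X i ω ≤ t} = ⋃ v ∈ W, A v := by
    ext ω
    simp only [Set.mem_setOf_eq, Set.mem_iUnion, hA, Set.mem_iInter, Set.mem_preimage,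
      Set.mem_singleton_iff, hW, Finset.mem_filter, Fintype.mem_piFinset, Finset.mem_range]
    constructor
    · intro hω
      refine ⟨fun i => X i ω, ⟨⟨fun i => ?_, hω⟩, fun i => rfl⟩⟩
      have : X i ω ≤ ∑ k, X k ω :=
        Finset.single_le_sum (f := fun k => X k ω) (fun k _ => Nat.zero_le _) (Finset.mem_univ i)
      show X i ω < t + 1
      omega
    · rintro ⟨v, ⟨_, hs⟩, hvi⟩
      have : ∑ i, X i ω = ∑ i, v i := Finset.sum_congr rfl fun i _ => hvi i
      omega
  have hAmeas : ∀ v : Fin ℓ → ℕ, MeasurableSet (A v) := fun v =>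
    MeasurableSet.iInter fun i => (hmeas i) (measurableSet_singleton _)
  have hdisj : (↑W : Set (Fin ℓ → ℕ)).PairwiseDisjoint A := by
    intro v _ v' _ hne
    rw [Function.onFun, Set.disjoint_left]
    intro ω hω hω'
    apply hne
    funext i
    have h1 := Set.mem_iInter.mp hω i
    have h2 := Set.mem_iInter.mp hω' i
    simp only [Set.mem_preimage, Set.mem_singleton_iff] at h1 h2
    rw [← h1, ← h2]
  have hprod : ∀ v : Fin ℓ → ℕ, μ (A v) = ∏ i, μ (X i ⁻¹' {v i}) := fun v =>
    hindep.meas_iInter fun i => ⟨{v i}, measurableSet_singleton _, rfl⟩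
  have hunif' : ∀ (i : Fin ℓ) (k : ℕ), μ (X i ⁻¹' {k}) =
      if 1 ≤ k ∧ k ≤ b i then ((b i : ℝ≥0∞))⁻¹ else 0 := by
    intro i k
    have h3 : X i ⁻¹' {k} = {ω | X i ω = k} := rfl
    rw [h3, hunif i k]
  have hmeasure : μ {ω | ∑ i, X i ω ≤ t} =
      (((Fintype.piFinset fun i => Finset.Icc 1 (b i)).filter fun v => ∑ i, v i ≤ t).card : ℝ≥0∞)
        * ∏ i, ((b i : ℝ≥0∞))⁻¹ := by
    rw [hevent, measure_biUnion_finset hdisj (fun v _ => hAmeas v)]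
    have hterm : ∀ v ∈ W, μ (A v) =
        if (∀ i, v i ∈ Finset.Icc 1 (b i)) then ∏ i, ((b i : ℝ≥0∞))⁻¹ else 0 := by
      intro v _
      rw [hprod v]
      by_cases hall : ∀ i, v i ∈ Finset.Icc 1 (b i)
      · rw [if_pos hall]
        refine Finset.prod_congr rfl fun i _ => ?_
        rw [hunif' i (v i), if_pos]
        have := hall i
        simp only [Finset.mem_Icc] at this
        exact this
      · rw [if_neg hall]
        push_neg at hall
        obtain ⟨i0, hi0⟩ := hall
        refine Finset.prod_eq_zero (Finset.mem_univ i0) ?_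
        rw [hunif' i0 (v i0), if_neg]
        simp only [Finset.mem_Icc] at hi0
        omega
    have hfs : W.filter (fun v => ∀ i, v i ∈ Finset.Icc 1 (b i)) =
        (Fintype.piFinset fun i => Finset.Icc 1 (b i)).filter fun v => ∑ i, v i ≤ t := by
      ext v
      simp only [hW, Finset.mem_filter, Fintype.mem_piFinset, Finset.mem_range, Finset.mem_Icc]
      constructor
      · rintro ⟨⟨_, hs⟩, hicc⟩
        exact ⟨hicc, hs⟩
      · rintro ⟨hicc, hs⟩
        refine ⟨⟨fun i => ?_, hs⟩, hicc⟩
        have h5 : v i ≤ ∑ k, v k :=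
          Finset.single_le_sum (f := fun k => v k) (fun k _ => Nat.zero_le _) (Finset.mem_univ i)
        have h6 := hicc i
        omega
    rw [Finset.sum_congr rfl hterm, Finset.sum_ite, Finset.sum_const_zero, add_zero,
      Finset.sum_const, hfs, nsmul_eq_mul]
  rw [hmeasure, ENNReal.toReal_mul, ENNReal.toReal_natCast, ENNReal.toReal_prod,
    card_cnt ℓ b t, F]
  have hprodcast : ((List.ofFn b).prod : ℝ) = ∏ i, (b i : ℝ) := by
    rw [List.prod_ofFn]
    push_cast
    rfl
  rw [hprodcast, div_eq_mul_inv]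
  congr 1
  rw [← Finset.prod_inv_distrib]
  exact Finset.prod_congr rfl fun i _ => by rw [ENNReal.toReal_inv, ENNReal.toReal_natCast]
end

section
/- Let a ≥ 1 and n ≥ ℓ ≥ 1 be integers, let α be a real number with α < 1/2, and let t ≥ 0 be an integer with t < α·ℓ·a. Then Θ_{t,n,ℓ}(a,…,a) < exp(−2(1/2−α)²·ℓ), where all n boxes contain a balls. -/
open MeasureTheory ProbabilityTheory
open scoped ENNReal

/-!
In a box of `c` balls the red ball sits at a uniformly random position `U ∈ {1, …, c}`, and
`M_s(c) = E[exp (-s U)]` satisfies `exp s * M_s(c) = 1/c + (1 - 1/c) * M_s(c - 1)`. For `s ≥ 0`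
this makes `exp (s t)` times the product of `M_s` over the `ℓ` smallest boxes an upper bound
for `Θ_{t,n,ℓ}`, by induction along the recursion: one draw, from whichever box, costs at most
the factor `exp s`. For `n` boxes of `a` balls the product is `M_s(a) ^ ℓ`, Hoeffding's lemma
(pair `u` with `a + 1 - u` and use `cosh x ≤ exp (x² / 2)`) bounds `M_s(a)` by
`exp (-s (a + 1) / 2 + s² (a - 1)² / 8)`, and `s = 4 (1/2 - α) / a` gives the claim.
-/

lemma List.le_getD {α : Type*} [Preorder α] {l : List α} {x d : α} (n : ℕ)
    (hl : ∀ z ∈ l, x ≤ z) (hd : x ≤ d) : x ≤ l.getD n d := by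
  rcases lt_or_ge n l.length with hn | hn
  · rw [l.getD_eq_getElem d hn]; exact hl _ (l.getElem_mem hn)
  · rwa [l.getD_eq_default d hn]

lemma List.take_succ_orderedInsert_perm {α : Type*} [LinearOrder α] {s : List α}
    (hs : s.Pairwise (· ≤ ·)) {x y : α} (hxy : x ≤ y) (l : ℕ) :
    List.Perm ((s.orderedInsert (· ≤ ·) x).take (l + 1))
      (s.take l ++ [min x (s.getD l y)]) := by
  induction s generalizing l with
  | nil => simp [hxy]
  | cons b s ih =>
    rw [List.pairwise_cons] at hs
    by_cases hxb : x ≤ b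
    · have hmin : min x ((b :: s).getD l y) = x :=
        min_eq_left <| List.le_getD l
          (by simpa using ⟨hxb, fun z hz => hxb.trans (hs.1 z hz)⟩) hxy
      rw [List.orderedInsert_cons_of_le _ _ hxb, List.take_succ_cons, hmin]
      exact (List.perm_append_singleton _ _).symm
    · rw [List.orderedInsert_of_not_le _ _ hxb]
      cases l with
      | zero => simp [(not_le.mp hxb).le]
      | succ l => simpa using (ih hs.2 l).cons b

lemma Multiset.sort_cons_eq_orderedInsert {α : Type*} [LinearOrder α] (x : α) (E : Multiset α) :
    (x ::ₘ E).sort (· ≤ ·) = (E.sort (· ≤ ·)).orderedInsert (· ≤ ·) x := by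
  induction E using Quot.inductionOn
  simp [List.mergeSort_eq_insertionSort]

open Finset Real

/-- `E[exp (-s U)]` for the position `U` of the red ball in a box of `c` balls, uniform on
`{1, …, c}`. -/
noncomputable def uniformLaplace (s : ℝ) (c : ℕ) : ℝ :=
  (∑ u ∈ range c, exp (-s * (u + 1))) / c

namespace uniformLaplace

variable {s : ℝ}

lemma nonneg (s : ℝ) (c : ℕ) : 0 ≤ uniformLaplace s c := by
  unfold uniformLaplace; positivity

lemma le_one (hs : 0 ≤ s) (c : ℕ) : uniformLaplace s c ≤ 1 := by
  refine div_le_one_of_le₀ ?_ c.cast_nonneg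
  calc ∑ u ∈ range c, exp (-s * (u + 1)) ≤ ∑ _u ∈ range c, (1 : ℝ) :=
        sum_le_sum fun u _ => exp_le_one_iff.mpr (by nlinarith [u.cast_nonneg (α := ℝ)])
    _ = c := by simp

lemma exp_mul_sum_range_succ (s : ℝ) (c : ℕ) :
    exp s * ∑ u ∈ range (c + 1), exp (-s * (u + 1))
      = 1 + ∑ u ∈ range c, exp (-s * (u + 1)) := by
  rw [sum_range_succ', mul_add, mul_sum, add_comm]
  congr 1
  · rw [← exp_add]; simp
  · exact sum_congr rfl fun u _ => by rw [← exp_add]; push_cast; ring_nf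

/-- First-step analysis: the red ball is on top with probability `1 / k`. -/
lemma exp_mul_eq (s : ℝ) {k : ℕ} (hk : 1 ≤ k) :
    exp s * uniformLaplace s k
      = (k : ℝ)⁻¹ + (1 - (k : ℝ)⁻¹) * uniformLaplace s (k - 1) := by
  obtain ⟨m, rfl⟩ := Nat.exists_eq_add_of_le' hk
  unfold uniformLaplace
  rw [Nat.add_sub_cancel, ← mul_div_assoc, exp_mul_sum_range_succ]
  rcases m.eq_zero_or_pos with rfl | hm
  · simp
  · have : (m : ℝ) ≠ 0 := by positivity
    field_simp
    push_cast
    ring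

lemma le_pred (hs : 0 ≤ s) {c : ℕ} (hc : 2 ≤ c) :
    uniformLaplace s c ≤ uniformLaplace s (c - 1) := by
  obtain ⟨c, rfl⟩ := Nat.exists_eq_add_of_le' (by omega : 1 ≤ c)
  rw [Nat.add_sub_cancel]
  unfold uniformLaplace
  have hc0 : (0 : ℝ) < c := by exact_mod_cast (by omega : 0 < c)
  rw [div_le_div_iff₀ (by positivity) hc0, sum_range_succ]
  have hlast : (c : ℝ) * exp (-s * (c + 1)) ≤ ∑ u ∈ range c, exp (-s * (u + 1)) := by
    simpa using card_nsmul_le_sum (range c) _ _ fun u hu =>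
      exp_le_exp.mpr (by
        have : (u : ℝ) ≤ c := by exact_mod_cast (mem_range.mp hu).le
        nlinarith)
  push_cast
  nlinarith

lemma inv_add_le_exp_mul (hs : 0 ≤ s) {k c : ℕ} (hk : 1 ≤ k) (hc : 1 ≤ c) :
    (k : ℝ)⁻¹ + (1 - (k : ℝ)⁻¹) * uniformLaplace s (min (k - 1) c)
      ≤ exp s * uniformLaplace s (min k c) := by
  rcases le_or_gt k c with hkc | hck
  · rw [min_eq_left hkc, min_eq_left (by omega)]
    exact (exp_mul_eq s hk).ge
  · rw [min_eq_right (by omega), min_eq_right hck.le, exp_mul_eq s hc]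
    have hinv : (k : ℝ)⁻¹ ≤ (c : ℝ)⁻¹ := inv_anti₀ (by positivity) (by exact_mod_cast hck.le)
    have hc1 : (c : ℝ)⁻¹ ≤ 1 := inv_le_one_of_one_le₀ (by exact_mod_cast hc)
    have hmono : (1 - (c : ℝ)⁻¹) * uniformLaplace s c
        ≤ (1 - (c : ℝ)⁻¹) * uniformLaplace s (c - 1) := by
      rcases hc.eq_or_lt with rfl | hc2
      · simp
      · exact mul_le_mul_of_nonneg_left (le_pred hs hc2) (by linarith)
    nlinarith [le_one hs c]

lemma le_exp_mul_cosh (s : ℝ) (a : ℕ) :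
    uniformLaplace s a ≤ exp (-s * (a + 1) / 2) * cosh (s * (a - 1) / 2) := by
  rcases a.eq_zero_or_pos with rfl | ha
  · simpa [uniformLaplace] using (mul_pos (exp_pos _) (cosh_pos _)).le
  have ha0 : (0 : ℝ) < a := by exact_mod_cast ha
  rw [uniformLaplace, div_le_iff₀ ha0]
  have hpair : ∀ u ∈ range a, exp (-s * (u + 1)) + exp (-s * ((a - 1 - u : ℕ) + 1))
      ≤ 2 * (exp (-s * (a + 1) / 2) * cosh (s * (a - 1) / 2)) := by
    intro u hu
    have hua : u + 1 ≤ a := mem_range.mp hu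
    have hcast : ((a - 1 - u : ℕ) : ℝ) = a - 1 - u := by
      rw [Nat.cast_sub (by omega), Nat.cast_sub (by omega)]; simp
    have hcosh : cosh (s * (u + 1 - (a + 1) / 2)) ≤ cosh (s * (a - 1) / 2) := by
      rw [cosh_le_cosh, mul_div_assoc, abs_mul, abs_mul]
      refine mul_le_mul_of_nonneg_left ?_ (abs_nonneg s)
      have : (1 : ℝ) ≤ a := by exact_mod_cast ha
      have : (u : ℝ) + 1 ≤ a := by exact_mod_cast hua
      rw [abs_of_nonneg (by linarith : (0 : ℝ) ≤ (a - 1) / 2), abs_le]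
      constructor <;> linarith [u.cast_nonneg (α := ℝ)]
    have hsplit : exp (-s * (u + 1)) + exp (-s * ((a - 1 - u : ℕ) + 1))
        = 2 * (exp (-s * (a + 1) / 2) * cosh (s * (u + 1 - (a + 1) / 2))) := by
      rw [hcast, cosh_eq, mul_div_assoc', mul_div_assoc', mul_div_cancel_left₀ _ two_ne_zero,
        mul_add (exp _), ← exp_add, ← exp_add]
      ring_nf
    rw [hsplit]
    gcongr
  have hsum := sum_le_sum hpair
  rw [sum_add_distrib, sum_range_reflect (fun u => exp (-s * ((u : ℝ) + 1))) a] at hsum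
  simp only [sum_const, card_range, nsmul_eq_mul] at hsum
  linarith

lemma le_exp (s : ℝ) (a : ℕ) :
    uniformLaplace s a ≤ exp (-(s * (a + 1) / 2 - s ^ 2 * (a - 1) ^ 2 / 8)) :=
  calc uniformLaplace s a ≤ exp (-s * (a + 1) / 2) * cosh (s * (a - 1) / 2) :=
        le_exp_mul_cosh s a
    _ ≤ exp (-s * (a + 1) / 2) * exp ((s * (a - 1) / 2) ^ 2 / 2) :=
        mul_le_mul_of_nonneg_left (cosh_le_exp_half_sq _) (exp_pos _).le
    _ = _ := by rw [← exp_add]; ring_nf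

end uniformLaplace

noncomputable def potential (s : ℝ) (l : ℕ) (M : Multiset ℕ) : ℝ :=
  (((M.sort (· ≤ ·)).take l).map (uniformLaplace s)).prod

lemma potential_nonneg (s : ℝ) (l : ℕ) (M : Multiset ℕ) : 0 ≤ potential s l M :=
  List.prod_nonneg fun _ hz => by
    obtain ⟨c, _, rfl⟩ := List.mem_map.mp hz
    exact uniformLaplace.nonneg s c

lemma potential_zero (s : ℝ) (M : Multiset ℕ) : potential s 0 M = 1 := by
  simp [potential]

lemma potential_succ_cons (s : ℝ) {x y : ℕ} (hxy : x ≤ y) (l : ℕ) (E : Multiset ℕ) :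
    potential s (l + 1) (x ::ₘ E)
      = uniformLaplace s (min x ((E.sort (· ≤ ·)).getD l y)) * potential s l E := by
  rw [potential, potential, Multiset.sort_cons_eq_orderedInsert,
    ((List.take_succ_orderedInsert_perm (Multiset.pairwise_sort _ _) hxy l).map _).prod_eq]
  simp [mul_comm]

lemma potential_step {s : ℝ} (hs : 0 ≤ s) {E : Multiset ℕ} (hE : ∀ y ∈ E, 1 ≤ y) {k : ℕ}
    (hk : 1 ≤ k) (l : ℕ) :
    (k : ℝ)⁻¹ * potential s l E + (1 - (k : ℝ)⁻¹) * potential s (l + 1) ((k - 1) ::ₘ E)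
      ≤ exp s * potential s (l + 1) (k ::ₘ E) := by
  rw [potential_succ_cons s (le_refl k), potential_succ_cons s (Nat.sub_le k 1)]
  have hc : 1 ≤ (E.sort (· ≤ ·)).getD l k :=
    List.le_getD l (fun z hz => hE z ((Multiset.mem_sort _).mp hz)) hk
  have := mul_le_mul_of_nonneg_right (uniformLaplace.inv_add_le_exp_mul hs hk hc)
    (potential_nonneg s l E)
  linarith

lemma theta_draw_le {s : ℝ} (hs : 0 ≤ s) {t : ℕ}
    (ih : ∀ (as : List ℕ) (l : ℕ), (∀ y ∈ as, 1 ≤ y) →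
      theta t as l ≤ exp (s * t) * potential s l as)
    {as : List ℕ} (has : ∀ y ∈ as, 1 ≤ y) {j : ℕ} (hj : j < as.length) (l : ℕ) :
    ((as.getD j 1 : ℝ))⁻¹ * theta t (as.eraseIdx j) l
        + (1 - ((as.getD j 1 : ℝ))⁻¹) *
          theta t (if as.getD j 1 ≤ 1 then as.eraseIdx j
            else as.set j (as.getD j 1 - 1)) (l + 1)
      ≤ exp (s * ↑(t + 1)) * potential s (l + 1) as := by
  set k := as.getD j 1
  set E : Multiset ℕ := ↑(as.eraseIdx j)
  have hkj : k = as[j] := as.getD_eq_getElem 1 hj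
  have hk : 1 ≤ k := has k (hkj ▸ as.getElem_mem hj)
  have hE : ∀ y ∈ as.eraseIdx j, 1 ≤ y := fun y hy =>
    has y ((as.eraseIdx_sublist j).subset hy)
  have hasE : (↑as : Multiset ℕ) = k ::ₘ E :=
    (Multiset.coe_eq_coe.mpr (hkj ▸ List.getElem_cons_eraseIdx_perm hj)).symm
  have hk0 : (0 : ℝ) ≤ 1 - (k : ℝ)⁻¹ :=
    sub_nonneg.mpr (inv_le_one_of_one_le₀ (by exact_mod_cast hk))
  have hred : (k : ℝ)⁻¹ * theta t (as.eraseIdx j) l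
      ≤ (k : ℝ)⁻¹ * (exp (s * t) * potential s l E) :=
    mul_le_mul_of_nonneg_left (ih _ l hE) (by positivity)
  have hwhite :
      (1 - (k : ℝ)⁻¹) * theta t (if k ≤ 1 then as.eraseIdx j else as.set j (k - 1)) (l + 1)
      ≤ (1 - (k : ℝ)⁻¹) * (exp (s * t) * potential s (l + 1) ((k - 1) ::ₘ E)) := by
    split_ifs with hk1
    · simp [le_antisymm hk1 hk]
    · have hset : ∀ y ∈ as.set j (k - 1), 1 ≤ y := fun y hy =>
        (List.mem_or_eq_of_mem_set hy).elim (has y) (fun h => by omega)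
      have hsetE : (↑(as.set j (k - 1)) : Multiset ℕ) = (k - 1) ::ₘ E :=
        Multiset.coe_eq_coe.mpr (List.set_perm_cons_eraseIdx hj _)
      exact mul_le_mul_of_nonneg_left (hsetE ▸ ih _ (l + 1) hset) hk0
  calc _ ≤ exp (s * t) * ((k : ℝ)⁻¹ * potential s l E
          + (1 - (k : ℝ)⁻¹) * potential s (l + 1) ((k - 1) ::ₘ E)) := by linarith
    _ ≤ exp (s * t) * (exp s * potential s (l + 1) (k ::ₘ E)) :=
        mul_le_mul_of_nonneg_left (potential_step hs (by simpa [E] using hE) hk l) (exp_pos _).le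
    _ = exp (s * ↑(t + 1)) * potential s (l + 1) as := by
        rw [hasE, ← mul_assoc, ← exp_add]; push_cast; ring_nf

theorem theta_le_exp_mul_potential {s : ℝ} (hs : 0 ≤ s) (t : ℕ) (as : List ℕ) (l : ℕ)
    (has : ∀ y ∈ as, 1 ≤ y) : theta t as l ≤ exp (s * t) * potential s l as := by
  induction t generalizing as l with
  | zero =>
    cases l with
    | zero => simp [theta, potential_zero]
    | succ l => simpa [theta] using potential_nonneg s (l + 1) as
  | succ t ih =>
    cases l with
    | zero => simpa [theta, potential_zero] using one_le_exp (by positivity)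
    | succ l =>
      rw [theta]
      split_ifs with h
      · exact Finset.sup'_le _ _ fun j hj =>
          theta_draw_le hs ih has (Finset.mem_range.mp hj) l
      · exact mul_nonneg (exp_pos _).le (potential_nonneg _ _ _)

lemma potential_replicate (s : ℝ) {l n : ℕ} (hl : l ≤ n) (a : ℕ) :
    potential s l ↑(List.replicate n a) = uniformLaplace s a ^ l := by
  have hsort : (↑(List.replicate n a) : Multiset ℕ).sort (· ≤ ·) = List.replicate n a :=
    List.mergeSort_eq_self _ (List.pairwise_replicate.mpr (Or.inr le_rfl))
  rw [potential, hsort, List.take_replicate, min_eq_left hl, List.map_replicate,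
    List.prod_replicate]

theorem theta_replicate_le {s : ℝ} (hs : 0 ≤ s) (t : ℕ) {a : ℕ} (ha : 1 ≤ a) {l n : ℕ}
    (hl : l ≤ n) :
    theta t (List.replicate n a) l
      ≤ exp (s * t - l * (s * (a + 1) / 2 - s ^ 2 * (a - 1) ^ 2 / 8)) := by
  have hbound := theta_le_exp_mul_potential hs t (List.replicate n a) l
    fun y hy => (List.eq_of_mem_replicate hy).symm ▸ ha
  rw [potential_replicate s hl] at hbound
  refine hbound.trans ?_
  rw [sub_eq_add_neg, exp_add, ← mul_neg, exp_nat_mul]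
  exact mul_le_mul_of_nonneg_left
    (pow_le_pow_left₀ (uniformLaplace.nonneg s a) (uniformLaplace.le_exp s a) l) (exp_pos _).le

theorem theta_replicate_lt_exp_general
    (a n ℓ : ℕ) (ha : 1 ≤ a) (hℓn : ℓ ≤ n)
    (α : ℝ) (hα : α < 1/2) (t : ℕ) (ht : (t : ℝ) < α * ℓ * a) :
    theta t (List.replicate n a) ℓ < Real.exp (-2 * (1/2 - α)^2 * ℓ) := by
  set β := 1 / 2 - α with hβ_def
  have hβ : 0 < β := by linarith
  have ha0 : (1 : ℝ) ≤ a := by exact_mod_cast ha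
  -- the Hoeffding-optimal parameter is `4 (β a + 1/2) / (a - 1)²`; `4 β / a` is enough
  set s := 4 * β / a
  have hsa : s * a = 4 * β := div_mul_cancel₀ _ (by positivity)
  have hs : 0 < s := by positivity
  have hs4 : s ≤ 4 * β := by nlinarith
  refine (theta_replicate_le hs.le t ha hℓn).trans_lt (exp_lt_exp.mpr ?_)
  have hst : s * t < 2 * β * ℓ - 4 * β ^ 2 * ℓ :=
    (mul_lt_mul_of_pos_left ht hs).trans_eq <| by
      rw [show s * (α * ℓ * a) = s * a * α * ℓ by ring, hsa, hβ_def]; ring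
  have hrate : 2 * β - 2 * β ^ 2 ≤ s * (a + 1) / 2 - s ^ 2 * (a - 1) ^ 2 / 8 := by
    nlinarith
  nlinarith [mul_le_mul_of_nonneg_left hrate ℓ.cast_nonneg]

theorem theta_replicate_lt_exp
    (a n ℓ : ℕ) (ha : 1 ≤ a) (hℓ1 : 1 ≤ ℓ) (hℓn : ℓ ≤ n)
    (α : ℝ) (hα : α < 1/2) (t : ℕ) (ht : (t : ℝ) < α * ℓ * a) :
    theta t (List.replicate n a) ℓ < Real.exp (-2 * (1/2 - α)^2 * ℓ) :=
  theta_replicate_lt_exp_general a n ℓ ha hℓn α hα t ht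
end

section
/- For any positive integers a_1,…,a_n, any 0 ≤ ℓ ≤ n, and any integer t ≥ 0, Θ_{t,n,ℓ}(a_1,…,a_n) ≥ Pr[ x_1 + ⋯ + x_ℓ ≤ t ], where x_1,…,x_ℓ are independent random variables and each x_i is uniformly distributed on {1,…,a_i}. (This lower bound is achieved by the strategy that exhausts box 1 until its red ball is found, then box 2, and so on.) -/
open MeasureTheory ProbabilityTheory
open scoped ENNReal

/-!
Exhausting the boxes one after another finds the red ball of box `i` after `x_i` draws, with `x_i`
uniform on `{1, …, a_i}` and independent over the boxes, so this strategy collects `ℓ` red balls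
within `t` draws with probability `Pr[x_1 + ⋯ + x_ℓ ≤ t]`. Conditioning on the first draw turns
this probability into the value of the choice `j = 0` in the recursion for `theta`, so by induction
on `t` it is at most `theta`.
-/

open Finset

noncomputable def uniformMass (b k : ℕ) : ℝ :=
  if 1 ≤ k ∧ k ≤ b then (b : ℝ)⁻¹ else 0

lemma uniformMass_nonneg (b k : ℕ) : 0 ≤ uniformMass b k := by
  unfold uniformMass; split_ifs <;> positivity

@[simp]
lemma uniformMass_zero_right (b : ℕ) : uniformMass b 0 = 0 := by
  simp [uniformMass]

lemma uniformMass_one_right {b : ℕ} (hb : 1 ≤ b) : uniformMass b 1 = (b : ℝ)⁻¹ := by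
  simp [uniformMass, hb]

lemma uniformMass_add_two {b : ℕ} (hb : 1 ≤ b) (k : ℕ) :
    uniformMass b (k + 2) = (1 - (b : ℝ)⁻¹) * uniformMass (b - 1) (k + 1) := by
  unfold uniformMass
  by_cases hk : k + 2 ≤ b
  · have hcast : ((b - 1 : ℕ) : ℝ) = b - 1 := by push_cast [Nat.cast_sub hb]; ring
    have hb1 : (b : ℝ) - 1 ≠ 0 := by
      have : (2 : ℝ) ≤ b := by exact_mod_cast hk.trans' (Nat.le_add_left 2 k)
      linarith
    rw [if_pos ⟨by omega, hk⟩, if_pos ⟨by omega, by omega⟩, hcast]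
    field_simp
  · rw [if_neg (by omega), if_neg (by omega), mul_zero]

lemma ofReal_uniformMass (b k : ℕ) :
    ENNReal.ofReal (uniformMass b k) = if 1 ≤ k ∧ k ≤ b then (b : ℝ≥0∞)⁻¹ else 0 := by
  unfold uniformMass
  split_ifs with h
  · rw [ENNReal.ofReal_inv_of_pos (by exact_mod_cast h.1.trans h.2), ENNReal.ofReal_natCast]
  · exact ENNReal.ofReal_zero

/-- `probSumLe t ws` is the probability that a sum of independent `ℕ`-valued random variables with
mass functions `ws` is at most `t`. -/
noncomputable def probSumLe : ℕ → List (ℕ → ℝ) → ℝ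
  | _, [] => 1
  | t, w :: ws => ∑ j ∈ range (t + 1), w j * probSumLe (t - j) ws

@[simp]
lemma probSumLe_nil (t : ℕ) : probSumLe t [] = 1 := rfl

lemma probSumLe_cons (t : ℕ) (w : ℕ → ℝ) (ws : List (ℕ → ℝ)) :
    probSumLe t (w :: ws) = ∑ j ∈ range (t + 1), w j * probSumLe (t - j) ws := rfl

lemma probSumLe_zero_uniformMass_cons (b : ℕ) (ws : List (ℕ → ℝ)) :
    probSumLe 0 (uniformMass b :: ws) = 0 := by
  simp [probSumLe_cons]

lemma probSumLe_succ_uniformMass_cons {b : ℕ} (hb : 1 ≤ b) (t : ℕ) (ws : List (ℕ → ℝ)) :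
    probSumLe (t + 1) (uniformMass b :: ws) =
      (b : ℝ)⁻¹ * probSumLe t ws + (1 - (b : ℝ)⁻¹) * probSumLe t (uniformMass (b - 1) :: ws) := by
  rw [probSumLe_cons, probSumLe_cons, sum_range_succ', sum_range_succ', sum_range_succ',
    mul_add, mul_sum]
  simp only [uniformMass_zero_right, zero_mul, add_zero, uniformMass_one_right hb,
    uniformMass_add_two hb, mul_assoc, Nat.add_sub_add_right, zero_add, Nat.add_sub_cancel,
    mul_zero]
  ring

def sumLeTuples (ℓ t : ℕ) : Finset (Fin ℓ → ℕ) :=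
  {k ∈ Fintype.piFinset fun _ => range (t + 1) | ∑ i, k i ≤ t}

@[simp]
lemma mem_sumLeTuples {ℓ t : ℕ} {k : Fin ℓ → ℕ} : k ∈ sumLeTuples ℓ t ↔ ∑ i, k i ≤ t := by
  simp only [sumLeTuples, mem_filter, Fintype.mem_piFinset, mem_range, and_iff_right_iff_imp]
  exact fun h i => Nat.lt_succ_of_le ((single_le_sum (fun j _ => Nat.zero_le (k j))
    (mem_univ i)).trans h)

lemma sum_sumLeTuples_succ {m : ℕ} (w : Fin (m + 1) → ℕ → ℝ) (t : ℕ) :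
    ∑ k ∈ sumLeTuples (m + 1) t, ∏ i, w i (k i) =
      ∑ j ∈ range (t + 1), w 0 j * ∑ k ∈ sumLeTuples m (t - j), ∏ i, w i.succ (k i) := by
  simp only [mul_sum]
  rw [sum_sigma']
  refine sum_nbij' (fun k => ⟨k 0, Fin.tail k⟩) (fun x => Fin.cons x.1 x.2) ?_ ?_ ?_ ?_ ?_
  · intro k hk
    simp only [mem_sigma, mem_range, mem_sumLeTuples] at hk ⊢
    rw [Fin.sum_univ_succ] at hk
    exact ⟨by omega, by simp only [Fin.tail]; omega⟩
  · intro x hx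
    simp only [mem_sigma, mem_range, mem_sumLeTuples] at hx ⊢
    rw [Fin.sum_cons]
    omega
  · intro k _
    exact Fin.cons_self_tail k
  · intro x _
    simp
  · intro k _
    rw [Fin.prod_univ_succ]
    rfl

lemma sum_sumLeTuples_prod_eq_probSumLe :
    ∀ {ℓ : ℕ} (w : Fin ℓ → ℕ → ℝ) (t : ℕ),
      ∑ k ∈ sumLeTuples ℓ t, ∏ i, w i (k i) = probSumLe t (List.ofFn w)
  | 0, w, t => by
    simp [sumLeTuples, Fintype.piFinset_of_isEmpty]
  | m + 1, w, t => by
    rw [sum_sumLeTuples_succ, List.ofFn_succ, probSumLe_cons]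
    simp only [sum_sumLeTuples_prod_eq_probSumLe]

lemma measure_mem_le_sum_prod {ι Ω β : Type*} [Fintype ι] [MeasurableSpace Ω] [MeasurableSpace β]
    [MeasurableSingletonClass β] {μ : Measure Ω} {X : ι → Ω → β} (hX : iIndepFun X μ)
    (F : Finset (ι → β)) :
    μ {ω | (fun i => X i ω) ∈ F} ≤ ∑ k ∈ F, ∏ i, μ {ω | X i ω = k i} := by
  have hunion : {ω | (fun i => X i ω) ∈ F} = ⋃ k ∈ F, ⋂ i, {ω | X i ω = k i} := by
    ext ω
    simp only [Set.mem_ofPred_eq, Set.mem_iUnion, Set.mem_iInter, exists_prop]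
    exact ⟨fun h => ⟨_, h, fun _ => rfl⟩, fun ⟨k, hk, hXk⟩ => (funext hXk : _ = k) ▸ hk⟩
  rw [hunion]
  refine (measure_biUnion_finset_le F _).trans_eq (sum_congr rfl fun k _ => ?_)
  exact hX.meas_iInter fun i => ⟨{k i}, measurableSet_singleton _, rfl⟩

lemma theta_succ_cons_ge {a l : ℕ} (rest : List ℕ) (t : ℕ) (hl : l ≤ rest.length) :
    (a : ℝ)⁻¹ * theta t rest l
        + (1 - (a : ℝ)⁻¹) * theta t (if a ≤ 1 then rest else (a - 1) :: rest) (l + 1)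
      ≤ theta (t + 1) (a :: rest) (l + 1) := by
  rw [theta, dif_pos (by simpa using hl)]
  exact le_sup'_of_le _ (b := 0) (by simp) (by simp)

lemma probSumLe_le_theta :
    ∀ (t : ℕ) {as : List ℕ} {l : ℕ}, (∀ x ∈ as, 1 ≤ x) → l ≤ as.length →
      probSumLe t ((as.take l).map uniformMass) ≤ theta t as l
  | _, _, 0, _, _ => by simp [theta]
  | _, [], _ + 1, _, hl => by simp at hl
  | 0, a :: rest, l + 1, _, _ => by
    simp [probSumLe_zero_uniformMass_cons, theta]
  | t + 1, a :: rest, l + 1, hpos, hl => by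
    have ha : 1 ≤ a := hpos a List.mem_cons_self
    have hrest : ∀ x ∈ rest, 1 ≤ x := fun x hx => hpos x (List.mem_cons_of_mem a hx)
    have hl' : l ≤ rest.length := by simpa using hl
    refine le_trans ?_ (theta_succ_cons_ge rest t hl')
    rw [List.take_succ_cons, List.map_cons, probSumLe_succ_uniformMass_cons ha]
    gcongr ?_ + ?_
    · exact mul_le_mul_of_nonneg_left (probSumLe_le_theta t hrest hl') (by positivity)
    · rcases Nat.lt_or_ge a 2 with ha2 | ha2
      · obtain rfl : a = 1 := by omega
        simp
      · rw [if_neg (by omega)]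
        refine mul_le_mul_of_nonneg_left ?_
          (sub_nonneg.2 (inv_le_one_of_one_le₀ (by exact_mod_cast ha)))
        have := probSumLe_le_theta t (as := (a - 1) :: rest) (l := l + 1)
          (by simpa [show 1 ≤ a - 1 by omega] using hrest) (by simpa using hl')
        simpa using this

theorem theta_ge_prob_sum_le_general
    {n : ℕ} (a : Fin n → ℕ) (ha : ∀ i, 1 ≤ a i)
    (ℓ t : ℕ) (hℓ : ℓ ≤ n)
    {Ω : Type*} [MeasurableSpace Ω] (μ : Measure Ω)
    (X : Fin ℓ → Ω → ℕ)
    (hindep : iIndepFun X μ)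
    (hunif : ∀ (i : Fin ℓ) (k : ℕ),
      μ {ω | X i ω = k} =
        if 1 ≤ k ∧ k ≤ a (Fin.castLE hℓ i) then ((a (Fin.castLE hℓ i) : ℝ≥0∞))⁻¹ else 0) :
    (μ {ω | ∑ i, X i ω ≤ t}).toReal ≤ theta t (List.ofFn a) ℓ := by
  set w : Fin ℓ → ℕ → ℝ := fun i => uniformMass (a (Fin.castLE hℓ i))
  have hw : List.ofFn w = ((List.ofFn a).take ℓ).map uniformMass := by
    rw [← Fin.ofFn_take_eq_take_ofFn hℓ, List.map_ofFn]
    rfl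
  have hprob : μ {ω | ∑ i, X i ω ≤ t} ≤ ENNReal.ofReal (∑ k ∈ sumLeTuples ℓ t, ∏ i, w i (k i)) := by
    have := measure_mem_le_sum_prod hindep (sumLeTuples ℓ t)
    simp only [mem_sumLeTuples, hunif, ← ofReal_uniformMass] at this
    rwa [ENNReal.ofReal_sum_of_nonneg fun k _ => prod_nonneg fun i _ => uniformMass_nonneg _ _,
      sum_congr rfl fun k _ => ENNReal.ofReal_prod_of_nonneg fun i _ => uniformMass_nonneg _ _]
  calc (μ {ω | ∑ i, X i ω ≤ t}).toReal
      ≤ ∑ k ∈ sumLeTuples ℓ t, ∏ i, w i (k i) :=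
        ENNReal.toReal_le_of_le_ofReal
          (sum_nonneg fun k _ => prod_nonneg fun i _ => uniformMass_nonneg _ _) hprob
    _ = probSumLe t (((List.ofFn a).take ℓ).map uniformMass) := by
        rw [sum_sumLeTuples_prod_eq_probSumLe, hw]
    _ ≤ theta t (List.ofFn a) ℓ :=
        probSumLe_le_theta t (by simpa [List.mem_ofFn] using ha) (by simpa using hℓ)

theorem theta_ge_prob_sum_le
    {n : ℕ} (a : Fin n → ℕ) (ha : ∀ i, 1 ≤ a i)
    (ℓ t : ℕ) (hℓ : ℓ ≤ n)
    {Ω : Type*} [MeasurableSpace Ω] (μ : Measure Ω) [IsProbabilityMeasure μ]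
    (X : Fin ℓ → Ω → ℕ) (hmeas : ∀ i, Measurable (X i))
    (hindep : iIndepFun X μ)
    (hunif : ∀ (i : Fin ℓ) (k : ℕ),
      μ {ω | X i ω = k} =
        if 1 ≤ k ∧ k ≤ a (Fin.castLE hℓ i) then ((a (Fin.castLE hℓ i) : ℝ≥0∞))⁻¹ else 0) :
    (μ {ω | ∑ i, X i ω ≤ t}).toReal ≤ theta t (List.ofFn a) ℓ :=
  theta_ge_prob_sum_le_general a ha ℓ t hℓ μ X hindep hunif
end

section
/- Let ℓ ≥ 1, let a_1,…,a_ℓ be positive integers, let a be an integer with a ≥ a_ℓ, and let t be an integer. If x_1,…,x_ℓ are independent with x_i uniformly distributed on {1,…,a_i}, then Pr[ ∑_{i=1}^{ℓ} x_i = t ] + (1/a)·Pr[ ∑_{i=1}^{ℓ} x_i ≤ t−1 ] ≥ (1/a)·Pr[ ∑_{i=1}^{ℓ−1} x_i ≤ t−1 ]. -/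
open MeasureTheory ProbabilityTheory
open scoped ENNReal

lemma aux_prob_sum {Ω : Type*} [MeasurableSpace Ω] (μ : Measure Ω) [IsProbabilityMeasure μ]
    (S Y : Ω → ℕ) (hS : Measurable S) (hY : Measurable Y)
    (hind : IndepFun S Y μ) (b c : ℕ) (hb : 1 ≤ b) (hbc : b ≤ c)
    (hunif : ∀ k : ℕ, μ {ω | Y ω = k} = if 1 ≤ k ∧ k ≤ b then ((b : ℝ≥0∞))⁻¹ else 0)
    (t : ℤ) :
    (μ {ω | ((S ω + Y ω : ℕ) : ℤ) = t}).toReal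
        + ((c : ℝ))⁻¹ * (μ {ω | ((S ω + Y ω : ℕ) : ℤ) ≤ t - 1}).toReal ≥
      ((c : ℝ))⁻¹ * (μ {ω | ((S ω : ℕ) : ℤ) ≤ t - 1}).toReal := by
  classical
  have hmeasNat : ∀ u : Set ℕ, MeasurableSet u := fun u => trivial
  have hbne : (b : ℝ≥0∞) ≠ 0 := Nat.cast_ne_zero.mpr (by omega)
  have hbtop : (b : ℝ≥0∞) ≠ ⊤ := ENNReal.natCast_ne_top b
  have hmul : ∀ u v : Set ℕ, μ (S ⁻¹' u ∩ Y ⁻¹' v) = μ (S ⁻¹' u) * μ (Y ⁻¹' v) :=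
    fun u v => hind.measure_inter_preimage_eq_mul u v (hmeasNat u) (hmeasNat v)
  -- Y is a.s. in [1, b]
  have habove : μ {ω | b < Y ω} = 0 := by
    have h1 : μ (Y ⁻¹' {k | 1 ≤ k ∧ k ≤ b}) = 1 := by
      have heq : Y ⁻¹' {k | 1 ≤ k ∧ k ≤ b} = ⋃ k ∈ Finset.Icc 1 b, {ω | Y ω = k} := by
        ext ω
        simp only [Set.mem_preimage, Set.mem_setOf_eq, Set.mem_iUnion, Finset.mem_Icc,
          exists_prop]
        exact ⟨fun h => ⟨Y ω, h, rfl⟩, by rintro ⟨k, hk, rfl⟩; exact hk⟩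
      rw [heq, measure_biUnion_finset]
      · rw [Finset.sum_congr rfl (fun k hk => by
          rw [hunif k, if_pos (Finset.mem_Icc.mp hk)])]
        simp [Finset.sum_const, Nat.card_Icc]
        rw [ENNReal.mul_inv_cancel hbne hbtop]
      · intro i _ j _ hij
        simp only [Function.onFun, Set.disjoint_left, Set.mem_setOf_eq]
        intro ω h1 h2
        exact hij (h1 ▸ h2 ▸ rfl)
      · exact fun k _ => hY (hmeasNat {k})
    have h2 : μ (Y ⁻¹' {k | 1 ≤ k ∧ k ≤ b})ᶜ = 0 := by
      rw [measure_compl (hY (hmeasNat _)) (measure_ne_top μ _), h1, measure_univ, tsub_self]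
    refine measure_mono_null ?_ h2
    intro ω hω
    simp only [Set.mem_compl_iff, Set.mem_preimage, Set.mem_setOf_eq] at *
    omega
  rcases le_or_gt t 0 with ht | ht
  · have h0 : {ω | ((S ω : ℕ) : ℤ) ≤ t - 1} = ∅ := by
      ext ω
      simp only [Set.mem_setOf_eq, Set.mem_empty_iff_false, iff_false]
      omega
    rw [h0]
    simp only [measure_empty, ENNReal.toReal_zero, mul_zero, ge_iff_le]
    positivity
  · set T := t.toNat with hTdef
    have hTt : (T : ℤ) = t := Int.toNat_of_nonneg ht.le
    have e1 : {ω | ((S ω + Y ω : ℕ) : ℤ) = t} = {ω | S ω + Y ω = T} := by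
      ext ω; simp only [Set.mem_setOf_eq]; omega
    have e2 : {ω | ((S ω + Y ω : ℕ) : ℤ) ≤ t - 1} = {ω | S ω + Y ω < T} := by
      ext ω; simp only [Set.mem_setOf_eq]; omega
    have e3 : {ω | ((S ω : ℕ) : ℤ) ≤ t - 1} = {ω | S ω < T} := by
      ext ω; simp only [Set.mem_setOf_eq]; omega
    rw [e1, e2, e3]
    -- key ENNReal inequality
    have hdisj : ∀ f : ℕ → Ω → Prop, (∀ s ω, f s ω → S ω = s) →
        (Finset.range T : Set ℕ).PairwiseDisjoint (fun s => {ω | f s ω}) := by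
      intro f hf i _ j _ hij
      simp only [Function.onFun, Set.disjoint_left, Set.mem_setOf_eq]
      intro ω h1 h2
      exact hij ((hf i ω h1) ▸ (hf j ω h2))
    have hA : μ {ω | S ω < T} = ∑ s ∈ Finset.range T, μ {ω | S ω = s} := by
      rw [show {ω | S ω < T} = ⋃ s ∈ Finset.range T, {ω | S ω = s} by
        ext ω
        simp only [Set.mem_setOf_eq, Set.mem_iUnion, Finset.mem_range, exists_prop]
        exact ⟨fun h => ⟨S ω, h, rfl⟩, by rintro ⟨s, hs, rfl⟩; exact hs⟩]
      exact measure_biUnion_finset (hdisj _ (fun s ω h => h)) (fun s _ => hS (hmeasNat {s}))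
    have hsplit : ∀ s, μ {ω | S ω = s} ≤
        μ {ω | S ω = s ∧ s + Y ω < T} + μ {ω | S ω = s ∧ T ≤ s + Y ω} := by
      intro s
      refine le_trans (measure_mono ?_) (measure_union_le _ _)
      intro ω hω
      simp only [Set.mem_setOf_eq, Set.mem_union] at *
      omega
    have hbound : ∀ s ∈ Finset.range T, μ {ω | S ω = s ∧ T ≤ s + Y ω} ≤
        (c : ℝ≥0∞) * μ {ω | S ω = s ∧ s + Y ω = T} := by
      intro s hs
      rw [Finset.mem_range] at hs
      have ep1 : {ω | S ω = s ∧ T ≤ s + Y ω} = S ⁻¹' {s} ∩ Y ⁻¹' {y | T ≤ s + y} := by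
        ext ω; simp [Set.mem_preimage]
      have ep2 : {ω | S ω = s ∧ s + Y ω = T} = S ⁻¹' {s} ∩ Y ⁻¹' {T - s} := by
        ext ω
        simp only [Set.mem_setOf_eq, Set.mem_inter_iff, Set.mem_preimage,
          Set.mem_singleton_iff]
        omega
      rw [ep1, ep2, hmul, hmul, mul_comm (c : ℝ≥0∞), mul_assoc]
      refine mul_le_mul_right ?_ _
      have hYval : μ (Y ⁻¹' {T - s}) = μ {ω | Y ω = T - s} := rfl
      by_cases hk : T - s ≤ b
      · have h1le : μ (Y ⁻¹' {y | T ≤ s + y}) ≤ 1 := prob_le_one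
        refine le_trans h1le ?_
        rw [hYval, hunif, if_pos ⟨by omega, hk⟩]
        calc (1 : ℝ≥0∞) = (b : ℝ≥0∞) * (b : ℝ≥0∞)⁻¹ := (ENNReal.mul_inv_cancel hbne hbtop).symm
          _ ≤ (b : ℝ≥0∞)⁻¹ * (c : ℝ≥0∞) := by
              rw [mul_comm]
              exact mul_le_mul_right (by exact_mod_cast hbc) _
      · have : μ (Y ⁻¹' {y | T ≤ s + y}) = 0 := by
          refine measure_mono_null ?_ habove
          intro ω hω
          simp only [Set.mem_preimage, Set.mem_setOf_eq] at *
          omega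
        rw [this]
        exact zero_le
    have hB : ∑ s ∈ Finset.range T, μ {ω | S ω = s ∧ s + Y ω < T} = μ {ω | S ω + Y ω < T} := by
      rw [show {ω | S ω + Y ω < T} = ⋃ s ∈ Finset.range T, {ω | S ω = s ∧ s + Y ω < T} by
        ext ω
        simp only [Set.mem_setOf_eq, Set.mem_iUnion, Finset.mem_range, exists_prop]
        exact ⟨fun h => ⟨S ω, by omega, rfl, by omega⟩, by rintro ⟨s, hs, rfl, h2⟩; omega⟩]
      exact (measure_biUnion_finset (f := fun s => {ω | S ω = s ∧ s + Y ω < T})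
        (hdisj _ (fun s ω h => h.1))
        (fun s _ => (hS (hmeasNat {s})).inter (hY (hmeasNat {y | s + y < T})))).symm
    have hC : ∑ s ∈ Finset.range T, μ {ω | S ω = s ∧ s + Y ω = T} ≤ μ {ω | S ω + Y ω = T} := by
      rw [← measure_biUnion_finset (f := fun s => {ω | S ω = s ∧ s + Y ω = T})
        (hdisj _ (fun s ω h => h.1))
        (fun s _ => (hS (hmeasNat {s})).inter (hY (hmeasNat {y | s + y = T})))]
      refine measure_mono ?_
      intro ω hω
      simp only [Set.mem_iUnion, Finset.mem_range, exists_prop, Set.mem_setOf_eq] at *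
      omega
    have key : μ {ω | S ω < T} ≤
        μ {ω | S ω + Y ω < T} + (c : ℝ≥0∞) * μ {ω | S ω + Y ω = T} := by
      calc μ {ω | S ω < T} = ∑ s ∈ Finset.range T, μ {ω | S ω = s} := hA
        _ ≤ ∑ s ∈ Finset.range T,
            (μ {ω | S ω = s ∧ s + Y ω < T} + μ {ω | S ω = s ∧ T ≤ s + Y ω}) :=
          Finset.sum_le_sum fun s _ => hsplit s
        _ ≤ ∑ s ∈ Finset.range T,
            (μ {ω | S ω = s ∧ s + Y ω < T} + (c : ℝ≥0∞) * μ {ω | S ω = s ∧ s + Y ω = T}) :=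
          Finset.sum_le_sum fun s hs => add_le_add_right (hbound s hs) _
        _ = (∑ s ∈ Finset.range T, μ {ω | S ω = s ∧ s + Y ω < T})
            + (c : ℝ≥0∞) * ∑ s ∈ Finset.range T, μ {ω | S ω = s ∧ s + Y ω = T} := by
          rw [Finset.sum_add_distrib, Finset.mul_sum]
        _ ≤ μ {ω | S ω + Y ω < T} + (c : ℝ≥0∞) * μ {ω | S ω + Y ω = T} := by
          rw [hB]
          exact add_le_add_right (mul_le_mul_right hC _) _
    have hcpos : (0 : ℝ) < (c : ℝ) := by
      have : 1 ≤ c := le_trans hb hbc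
      exact_mod_cast Nat.lt_of_lt_of_le Nat.zero_lt_one this
    have hreal : (μ {ω | S ω < T}).toReal ≤
        (μ {ω | S ω + Y ω < T}).toReal + (c : ℝ) * (μ {ω | S ω + Y ω = T}).toReal := by
      have h := ENNReal.toReal_mono (by
        exact ENNReal.add_ne_top.mpr ⟨measure_ne_top μ _,
          ENNReal.mul_ne_top (ENNReal.natCast_ne_top c) (measure_ne_top μ _)⟩) key
      rwa [ENNReal.toReal_add (measure_ne_top μ _)
        (ENNReal.mul_ne_top (ENNReal.natCast_ne_top c) (measure_ne_top μ _)),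
        ENNReal.toReal_mul, ENNReal.toReal_natCast] at h
    rw [ge_iff_le]
    have h2 := mul_le_mul_of_nonneg_left hreal (inv_nonneg.mpr hcpos.le)
    rw [mul_add, ← mul_assoc, inv_mul_cancel₀ (ne_of_gt hcpos), one_mul] at h2
    linarith

theorem prob_sum_eq_add_ge
    (n : ℕ) (a : Fin (n + 1) → ℕ) (hapos : ∀ i, 1 ≤ a i)
    (c : ℕ) (hc : a (Fin.last n) ≤ c) (t : ℤ)
    {Ω : Type*} [MeasurableSpace Ω] (μ : Measure Ω) [IsProbabilityMeasure μ]
    (X : Fin (n + 1) → Ω → ℕ) (hmeas : ∀ i, Measurable (X i))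
    (hindep : iIndepFun X μ)
    (hunif : ∀ (i : Fin (n + 1)) (k : ℕ),
      μ {ω | X i ω = k} = if 1 ≤ k ∧ k ≤ a i then ((a i : ℝ≥0∞))⁻¹ else 0) :
    (μ {ω | ((∑ i, X i ω : ℕ) : ℤ) = t}).toReal
        + ((c : ℝ))⁻¹ * (μ {ω | ((∑ i, X i ω : ℕ) : ℤ) ≤ t - 1}).toReal ≥
      ((c : ℝ))⁻¹ *
        (μ {ω | ((∑ i ∈ Finset.univ.erase (Fin.last n), X i ω : ℕ) : ℤ) ≤ t - 1}).toReal := by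
  classical
  have hsum : ∀ ω, (∑ i, X i ω) = (∑ i ∈ Finset.univ.erase (Fin.last n), X i ω)
      + X (Fin.last n) ω :=
    fun ω => (Finset.sum_erase_add _ _ (Finset.mem_univ _)).symm
  simp only [hsum]
  have hSmeas : Measurable (fun ω => ∑ i ∈ Finset.univ.erase (Fin.last n), X i ω) :=
    Finset.measurable_sum _ fun i _ => hmeas i
  have hind : IndepFun (fun ω => ∑ i ∈ Finset.univ.erase (Fin.last n), X i ω)
      (X (Fin.last n)) μ := by
    have h := hindep.indepFun_finsetSum_of_notMem hmeas
      (Finset.notMem_erase (Fin.last n) Finset.univ)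
    have heq : (∑ j ∈ Finset.univ.erase (Fin.last n), X j)
        = fun ω => ∑ i ∈ Finset.univ.erase (Fin.last n), X i ω := by
      funext ω
      exact Finset.sum_apply ω _ X
    rwa [heq] at h
  exact aux_prob_sum μ _ _ hSmeas (hmeas _) hind (a (Fin.last n)) c
    (hapos _) hc (hunif _) t
end

section
/- Let G be a cyclic group of prime order q, let g_1 be a generator of G, and let g_2 ∈ G with g_2 ≠ 1. Let N be a positive integer with N < q, and define L = { (g_1^r, g_2^r) : r ∈ ℤ } ⊆ G × G. Then for every pair (u_1, u_2) ∈ G × G, there is at most one π ∈ {1,…,N} such that (u_1, u_2·g_2^{−π}) ∈ L; that is, if π_1, π_2 ∈ {1,…,N} satisfy (u_1, u_2·g_2^{−π_1}) ∈ L and (u_1, u_2·g_2^{−π_2}) ∈ L, then π_1 = π_2. -/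
/-!
Equal first coordinates force the exponents `r₁, r₂` to agree modulo `ord g₁`, hence modulo
`ord g₂ ∣ ord g₁`, so the second coordinates give `g₂ ^ π₁ = g₂ ^ π₂`. Since `g₂ ≠ 1` in a group of
prime order `q`, this means `π₁ ≡ π₂ [MOD q]`, and two passwords below `q` must then coincide.
-/

theorem zpow_eq_zpow_of_mem_shifted_graph {G : Type*} [Group G] {g₁ g₂ u₁ u₂ : G}
    (hdvd : orderOf g₂ ∣ orderOf g₁) {a₁ a₂ : ℤ}
    (h₁ : ∃ r : ℤ, u₁ = g₁ ^ r ∧ u₂ * g₂ ^ (-a₁) = g₂ ^ r)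
    (h₂ : ∃ r : ℤ, u₁ = g₁ ^ r ∧ u₂ * g₂ ^ (-a₂) = g₂ ^ r) :
    g₂ ^ a₁ = g₂ ^ a₂ := by
  obtain ⟨r₁, hu₁, hv₁⟩ := h₁
  obtain ⟨r₂, hu₂, hv₂⟩ := h₂
  have hr : g₂ ^ r₁ = g₂ ^ r₂ := by
    rw [zpow_eq_zpow_iff_modEq]
    exact (zpow_eq_zpow_iff_modEq.mp (hu₁.symm.trans hu₂)).of_dvd (Int.natCast_dvd_natCast.mpr hdvd)
  have solve : ∀ a r : ℤ, u₂ * g₂ ^ (-a) = g₂ ^ r → g₂ ^ a = (g₂ ^ r)⁻¹ * u₂ := by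
    intro a r h
    rw [← h]
    group
  rw [solve a₁ r₁ hv₁, solve a₂ r₂ hv₂, hr]

theorem regular_transformation_R2_general
    (G : Type*) [Group G] [Fintype G] (q : ℕ) (hq : q.Prime)
    (hcard : Fintype.card G = q)
    (g₁ g₂ : G) (hg₁ : ∀ x : G, x ∈ Subgroup.zpowers g₁) (hg₂ : g₂ ≠ 1)
    (N : ℕ) (hNq : N < q)
    (u₁ u₂ : G) (π₁ π₂ : ℕ)
    (hπ₁ : π₁ ∈ Finset.Icc 1 N) (hπ₂ : π₂ ∈ Finset.Icc 1 N)
    (hL₁ : ∃ r : ℤ, u₁ = g₁ ^ r ∧ u₂ * g₂ ^ (-(π₁ : ℤ)) = g₂ ^ r)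
    (hL₂ : ∃ r : ℤ, u₁ = g₁ ^ r ∧ u₂ * g₂ ^ (-(π₂ : ℤ)) = g₂ ^ r) :
    π₁ = π₂ := by
  have : Fact q.Prime := ⟨hq⟩
  have hg₁_order : orderOf g₁ = q := by
    rw [orderOf_eq_card_of_forall_mem_zpowers hg₁, Nat.card_eq_fintype_card, hcard]
  have hg₂_order : orderOf g₂ = q := orderOf_eq_prime (hcard ▸ pow_card_eq_one) hg₂
  have hpow := zpow_eq_zpow_of_mem_shifted_graph (by rw [hg₁_order, hg₂_order]) hL₁ hL₂
  rw [zpow_natCast, zpow_natCast, pow_eq_pow_iff_modEq, hg₂_order] at hpow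
  rw [Finset.mem_Icc] at hπ₁ hπ₂
  exact hpow.eq_of_lt_of_lt (by omega) (by omega)

theorem regular_transformation_R2
    (G : Type*) [Group G] [Fintype G] (q : ℕ) (hq : q.Prime)
    (hcard : Fintype.card G = q)
    (g₁ g₂ : G) (hg₁ : ∀ x : G, x ∈ Subgroup.zpowers g₁) (hg₂ : g₂ ≠ 1)
    (N : ℕ) (hN : 0 < N) (hNq : N < q)
    (u₁ u₂ : G) (π₁ π₂ : ℕ)
    (hπ₁ : π₁ ∈ Finset.Icc 1 N) (hπ₂ : π₂ ∈ Finset.Icc 1 N)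
    (hL₁ : ∃ r : ℤ, u₁ = g₁ ^ r ∧ u₂ * g₂ ^ (-(π₁ : ℤ)) = g₂ ^ r)
    (hL₂ : ∃ r : ℤ, u₁ = g₁ ^ r ∧ u₂ * g₂ ^ (-(π₂ : ℤ)) = g₂ ^ r) :
    π₁ = π₂ :=
  regular_transformation_R2_general G q hq hcard g₁ g₂ hg₁ hg₂ N hNq u₁ u₂ π₁ π₂ hπ₁ hπ₂ hL₁ hL₂
end
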